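/- arXiv:1505.02910 — 10 statements merged into one kernel-verified Lean document; each statement's English description precedes it below -/
import Mathlib

section
/- For every positive integer n, the identity Σ_{j=1}^{n} binom(n-1, n-j) / binom(n+j, j) = 1/2 holds. -/
open Finset

/-! Writing `n = m + 1` and `j = i + 1`, the summand is `g i - g (i + 1)` with
`g i = C(m, i) / (2 C(m + 1 + i, i))`: this follows from the absorption identities
`(i + 1) C(m, i + 1) = (m - i) C(m, i)` and `(i + 1) C(m + i + 2, i + 1) = (m + i + 2) C(m + 1 + i, i)`.
The sum telescopes to `g 0 - g (m + 1) = 1/2 - 0`. -/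

theorem cast_choose_succ_right_eq {K : Type*} [Field K] [CharZero K] (m i : ℕ) :
    (m.choose (i + 1) : K) * (i + 1) = m.choose i * (m - i) := by
  rcases le_or_gt i m with hi | hi
  · rw [← Nat.cast_sub hi]
    exact_mod_cast Nat.choose_succ_right_eq m i
  · simp [Nat.choose_eq_zero_of_lt hi, Nat.choose_eq_zero_of_lt (hi.trans i.lt_succ_self)]

theorem choose_div_choose_eq_sub {K : Type*} [Field K] [CharZero K] (m i : ℕ) :
    (m.choose i : K) / (m + 1 + (i + 1)).choose (i + 1) =
      m.choose i / (2 * (m + 1 + i).choose i) -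
        m.choose (i + 1) / (2 * (m + 1 + (i + 1)).choose (i + 1)) := by
  have hpascal : ((m + 1 + (i + 1)).choose (i + 1) : K) * (i + 1) =
      (m + 1 + i + 1) * (m + 1 + i).choose i := by
    exact_mod_cast (Nat.add_one_mul_choose_eq (m + 1 + i) i).symm
  have hb : ((m + 1 + i).choose i : K) ≠ 0 := Nat.cast_ne_zero.mpr (Nat.choose_pos (by omega)).ne'
  have hb' : ((m + 1 + (i + 1)).choose (i + 1) : K) ≠ 0 :=
    Nat.cast_ne_zero.mpr (Nat.choose_pos (by omega)).ne'
  have hi : (i + 1 : K) ≠ 0 := Nat.cast_add_one_ne_zero i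
  rw [eq_sub_iff_add_eq, div_add_div _ _ hb' (mul_ne_zero two_ne_zero hb'),
    div_eq_div_iff (mul_ne_zero hb' (mul_ne_zero two_ne_zero hb')) (mul_ne_zero two_ne_zero hb)]
  apply mul_right_cancel₀ hi
  linear_combination (2 * (m + 1 + i).choose i * (m + 1 + (i + 1)).choose (i + 1) : K) *
      cast_choose_succ_right_eq (K := K) m i -
    (2 * m.choose i * (m + 1 + (i + 1)).choose (i + 1) : K) * hpascal

/-- The combinatorial identity `∑_{j=1}^{n} C(n-1, n-j) / C(n+j, j) = 1/2`. -/
theorem sum_binom_ratio_eq_half (n : ℕ) (hn : 0 < n) :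
    ∑ j ∈ Finset.Icc 1 n,
        ((n - 1).choose (n - j) : ℚ) / ((n + j).choose j : ℚ) = 1 / 2 := by
  obtain ⟨m, rfl⟩ : ∃ m, n = m + 1 := ⟨n - 1, by omega⟩
  have hreindex : ∑ j ∈ Icc 1 (m + 1), ((m + 1 - 1).choose (m + 1 - j) : ℚ) / (m + 1 + j).choose j =
      ∑ i ∈ range (m + 1), (m.choose i : ℚ) / (m + 1 + (i + 1)).choose (i + 1) := by
    rw [← Ico_add_one_right_eq_Icc, sum_Ico_eq_sum_range]
    refine sum_congr rfl fun i hi ↦ ?_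
    rw [Nat.add_sub_cancel, add_comm 1 i, Nat.add_sub_add_right,
      Nat.choose_symm (by simpa [Nat.lt_succ_iff] using hi)]
  rw [hreindex, sum_congr rfl fun i _ ↦ choose_div_choose_eq_sub m i, sum_range_sub']
  simp
end

section
/- Let Z_N be a finite set of N = m + u elements, with m = u and m even, and let F be a set of functions from Z_N to ℝ. Let Z_m be an m-element subset chosen uniformly at random (without replacement) from Z_N and Z_u its complement. Then E[sup_{f∈F} (avg_f(Z_u) − avg_f(Z_m))] ≤ E[Q_{m,n}(F, Z_m)] for every n ∈ {1,...,m−1}, where Q_{m,n}(F, Z_m) = E_{Z_n}[sup_{f∈F} (avg_f(Z_m \ Z_n) − avg_f(Z_n))] with Z_n a uniformly random n-element subset of Z_m, and avg_f(S) denotes the average of f over the finite set S. -/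
/-!
For a fixed `Zm` with complement `Zu`, the average of `f` over `Zu` is the mean of its averages
over the `(m - n)`-subsets `A ⊆ Zu`, and its average over `Zm` is the mean of its averages over
the `n`-subsets `B ⊆ Zm`. Pulling the supremum over `F` inside these means bounds
`sup_f (avg_f Zu - avg_f Zm)` by the mean of `sup_f (avg_f A - avg_f B)`. When `Zm` is uniform,
the pair `(A, B)` is uniform among the disjoint pairs of sizes `(m - n, n)` in `Z_N`; so is the
pair `(Zm \ Zn, Zn)` appearing in the expected permutational Rademacher complexity.
-/

open Finset

/-- Average of `f` over a finite set. -/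
noncomputable def favg {α : Type*} (f : α → ℝ) (S : Finset α) : ℝ :=
  (∑ x ∈ S, f x) / S.card

/-- Permutational Rademacher complexity of a finite nonempty class `F`
on the set `Zm`, with split parameter `n`. -/
noncomputable def PRC {α : Type*} [DecidableEq α] (F : Finset (α → ℝ))
    (hF : F.Nonempty) (Zm : Finset α) (n : ℕ) : ℝ :=
  (1 / (Zm.card.choose n : ℝ)) *
    ∑ S ∈ Zm.powersetCard n, F.sup' hF fun f => favg f (Zm \ S) - favg f S

noncomputable def supAvgDiff {α : Type*} (F : Finset (α → ℝ)) (hF : F.Nonempty)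
    (A B : Finset α) : ℝ :=
  F.sup' hF fun f => favg f A - favg f B

theorem Finset.sup'_sum_le {ι κ β : Type*} [AddCommMonoid β] [SemilatticeSup β]
    [IsOrderedAddMonoid β] {F : Finset ι} (hF : F.Nonempty) (s : Finset κ) (g : ι → κ → β) :
    F.sup' hF (fun f => ∑ i ∈ s, g f i) ≤ ∑ i ∈ s, F.sup' hF (fun f => g f i) :=
  sup'_le _ _ fun _ hf => sum_le_sum fun i _ => le_sup' (g · i) hf

section

variable {α : Type*} [DecidableEq α]

theorem Finset.sum_powersetCard_sum {β : Type*} [AddCommMonoid β] (f : α → β) (T : Finset α)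
    {k : ℕ} (hk : k ≠ 0) :
    ∑ S ∈ T.powersetCard k, ∑ x ∈ S, f x = (#T - 1).choose (k - 1) • ∑ x ∈ T, f x := by
  rw [sum_comm' (t' := T) (s' := fun x => (T.powersetCard k).filter ({x} ⊆ ·)), smul_sum]
  · refine sum_congr rfl fun x hx => ?_
    rw [sum_const, card_filter_powersetCard_subset _ _ _ (singleton_subset_iff.2 hx)
      (by rwa [card_singleton, Nat.one_le_iff_ne_zero]), card_singleton]
  · intro S x
    simp only [mem_filter, mem_powersetCard, singleton_subset_iff]
    constructor
    · rintro ⟨⟨hST, hS⟩, hx⟩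
      exact ⟨⟨⟨hST, hS⟩, hx⟩, hST hx⟩
    · rintro ⟨⟨hST, hx⟩, -⟩
      exact ⟨hST, hx⟩

theorem sum_favg_powersetCard (f : α → ℝ) (T : Finset α) {k : ℕ} (hk : k ≠ 0) :
    ∑ S ∈ T.powersetCard k, favg f S = (#T).choose k * favg f T := by
  have hS : ∀ S ∈ T.powersetCard k, favg f S = (∑ x ∈ S, f x) / k := fun S hS => by
    rw [favg, (mem_powersetCard.1 hS).2]
  rw [sum_congr rfl hS, ← sum_div, sum_powersetCard_sum f T hk, favg, nsmul_eq_mul]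
  obtain ⟨j, rfl⟩ := Nat.exists_eq_add_one_of_ne_zero hk
  cases hT : #T with
  | zero => simp [card_eq_zero.1 hT]
  | succ t =>
    have hchoose : ((t + 1 : ℕ) : ℝ) * (t.choose j : ℕ) =
        ((t + 1).choose (j + 1) : ℕ) * ((j + 1 : ℕ) : ℝ) := by
      exact_mod_cast Nat.add_one_mul_choose_eq t j
    simp only [Nat.add_sub_cancel]
    field_simp
    linear_combination (∑ x ∈ T, f x) * hchoose

theorem sum_sum_powersetCard_favg_sub (f : α → ℝ) (U T : Finset α) {a b : ℕ} (ha : a ≠ 0)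
    (hb : b ≠ 0) :
    ∑ A ∈ U.powersetCard a, ∑ B ∈ T.powersetCard b, (favg f A - favg f B) =
      (#U).choose a * (#T).choose b * (favg f U - favg f T) := by
  simp only [sum_sub_distrib, sum_const, card_powersetCard, nsmul_eq_mul, ← mul_sum,
    sum_favg_powersetCard f _ ha, sum_favg_powersetCard f _ hb]
  ring

theorem choose_mul_choose_mul_supAvgDiff_le (F : Finset (α → ℝ)) (hF : F.Nonempty)
    (U T : Finset α) {a b : ℕ} (ha : a ≠ 0) (hb : b ≠ 0) :
    (#U).choose a * (#T).choose b * supAvgDiff F hF U T ≤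
      ∑ A ∈ U.powersetCard a, ∑ B ∈ T.powersetCard b, supAvgDiff F hF A B := calc
  _ = F.sup' hF fun f =>
        ∑ A ∈ U.powersetCard a, ∑ B ∈ T.powersetCard b, (favg f A - favg f B) := by
    rw [supAvgDiff, mul₀_sup' (by positivity)]
    simp only [sum_sum_powersetCard_favg_sub _ U T ha hb]
  _ ≤ ∑ A ∈ U.powersetCard a, F.sup' hF fun f =>
        ∑ B ∈ T.powersetCard b, (favg f A - favg f B) := sup'_sum_le ..
  _ ≤ _ := sum_le_sum fun A _ => sup'_sum_le ..

end

section

variable {α β : Type*} [DecidableEq α] [AddCommMonoid β]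

def disjointPairs (s : Finset α) (a b : ℕ) : Finset (Finset α × Finset α) :=
  (s.powersetCard a ×ˢ s.powersetCard b).filter fun p => Disjoint p.1 p.2

theorem sum_powersetCard_sdiff_eq_sum_disjointPairs (s : Finset α) (a b : ℕ)
    (g : Finset α → Finset α → β) :
    ∑ T ∈ s.powersetCard (a + b), ∑ S ∈ T.powersetCard b, g (T \ S) S =
      ∑ p ∈ disjointPairs s a b, g p.1 p.2 := by
  rw [sum_sigma']
  refine sum_nbij' (fun x => (x.1 \ x.2, x.2)) (fun p => ⟨p.1 ∪ p.2, p.2⟩) ?_ ?_ ?_ ?_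
    fun _ _ => rfl
  · rintro ⟨T, S⟩
    simp only [mem_sigma, mem_powersetCard, disjointPairs, mem_filter, mem_product]
    rintro ⟨⟨hT, hTc⟩, hS, hSc⟩
    refine ⟨⟨⟨sdiff_subset.trans hT, ?_⟩, hS.trans hT, hSc⟩, sdiff_disjoint⟩
    rw [card_sdiff_of_subset hS]
    omega
  · rintro ⟨A, B⟩
    simp only [mem_sigma, mem_powersetCard, disjointPairs, mem_filter, mem_product]
    rintro ⟨⟨⟨hA, hAc⟩, hB, hBc⟩, hAB⟩
    exact ⟨⟨union_subset hA hB, by rw [card_union_of_disjoint hAB, hAc, hBc]⟩,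
      subset_union_right, hBc⟩
  · rintro ⟨T, S⟩ hTS
    simp only [mem_sigma, mem_powersetCard] at hTS
    simp [sdiff_union_of_subset hTS.2.1]
  · rintro ⟨A, B⟩ hAB
    simp only [disjointPairs, mem_filter] at hAB
    simp [union_sdiff_cancel_right hAB.2]

theorem sum_powersetCard_sum_sum_eq_choose_smul_sum_disjointPairs (s : Finset α) {m a b : ℕ}
    (hbm : b ≤ m) (g : Finset α → Finset α → β) :
    ∑ Z ∈ s.powersetCard m, ∑ A ∈ (s \ Z).powersetCard a, ∑ B ∈ Z.powersetCard b, g A B =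
      (#s - (a + b)).choose (m - b) • ∑ p ∈ disjointPairs s a b, g p.1 p.2 := by
  simp only [← sum_product']
  rw [sum_comm' (t' := disjointPairs s a b)
    (s' := fun p => ((s \ p.1).powersetCard m).filter (p.2 ⊆ ·)), smul_sum]
  · refine sum_congr rfl fun ⟨A, B⟩ hAB => ?_
    simp only [disjointPairs, mem_filter, mem_product, mem_powersetCard] at hAB
    obtain ⟨⟨⟨hA, hAc⟩, hB, hBc⟩, hAB⟩ := hAB
    rw [sum_const, card_filter_powersetCard_subset _ _ _ (subset_sdiff.2 ⟨hB, hAB.symm⟩)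
      (hBc ▸ hbm), card_sdiff_of_subset hA, hAc, hBc, Nat.sub_sub]
  · rintro Z ⟨A, B⟩
    simp only [disjointPairs, mem_filter, mem_product, mem_powersetCard, subset_sdiff]
    constructor
    · rintro ⟨⟨hZ, hZc⟩, ⟨⟨hA, hAZ⟩, hAc⟩, hBZ, hBc⟩
      exact ⟨⟨⟨⟨hZ, hAZ.symm⟩, hZc⟩, hBZ⟩, ⟨⟨hA, hAc⟩, hBZ.trans hZ, hBc⟩,
        hAZ.mono_right hBZ⟩
    · rintro ⟨⟨⟨⟨hZ, hZA⟩, hZc⟩, hBZ⟩, ⟨⟨hA, hAc⟩, -, hBc⟩, -⟩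
      exact ⟨⟨hZ, hZc⟩, ⟨⟨hA, hZA.symm⟩, hAc⟩, hBZ, hBc⟩

end

section

variable {α : Type*} [DecidableEq α] (F : Finset (α → ℝ)) (hF : F.Nonempty)

theorem choose_mul_choose_mul_sum_supAvgDiff_le (s : Finset α) {m a b : ℕ} (ha : a ≠ 0)
    (hb : b ≠ 0) (hbm : b ≤ m) :
    (#s - m).choose a * m.choose b * ∑ Z ∈ s.powersetCard m, supAvgDiff F hF (s \ Z) Z ≤
      (#s - (a + b)).choose (m - b) *
        ∑ T ∈ s.powersetCard (a + b), ∑ S ∈ T.powersetCard b, supAvgDiff F hF (T \ S) S := by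
  have hcount := sum_powersetCard_sum_sum_eq_choose_smul_sum_disjointPairs s hbm
    (supAvgDiff F hF) (a := a)
  rw [nsmul_eq_mul] at hcount
  rw [sum_powersetCard_sdiff_eq_sum_disjointPairs, ← hcount, mul_sum]
  refine sum_le_sum fun Z hZ => ?_
  obtain ⟨hZs, rfl⟩ := mem_powersetCard.1 hZ
  simpa only [card_sdiff_of_subset hZs] using
    choose_mul_choose_mul_supAvgDiff_le F hF (s \ Z) Z ha hb

theorem sum_PRC_powersetCard (s : Finset α) (m n : ℕ) :
    ∑ Z ∈ s.powersetCard m, PRC F hF Z n =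
      (m.choose n : ℝ)⁻¹ *
        ∑ Z ∈ s.powersetCard m, ∑ S ∈ Z.powersetCard n, supAvgDiff F hF (Z \ S) S := by
  rw [mul_sum]
  refine sum_congr rfl fun Z hZ => ?_
  rw [PRC, (mem_powersetCard.1 hZ).2, one_div]
  rfl

end

theorem symmetrization_upper_general {α : Type*} [DecidableEq α]
    (ZN : Finset α) (F : Finset (α → ℝ)) (hF : F.Nonempty)
    (m u N n : ℕ) (hN : ZN.card = N) (hNmu : N = m + u) (hmu : m = u)
    (hn : 1 ≤ n) (hnm : n ≤ m - 1) :
    (1 / (N.choose m : ℝ)) *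
        ∑ Zm ∈ ZN.powersetCard m,
          F.sup' hF (fun f => favg f (ZN \ Zm) - favg f Zm)
      ≤ (1 / (N.choose m : ℝ)) *
          ∑ Zm ∈ ZN.powersetCard m, PRC F hF Zm n := by
  subst hNmu hmu
  have hnm_le : n ≤ m := by omega
  have hC : 0 < (m.choose n : ℝ) := by have := Nat.choose_pos hnm_le; positivity
  have key := choose_mul_choose_mul_sum_supAvgDiff_le F hF ZN (a := m - n) (by omega)
    (by omega) hnm_le
  rw [hN, Nat.sub_add_cancel hnm_le, Nat.add_sub_cancel, Nat.choose_symm hnm_le, mul_assoc] at key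
  refine mul_le_mul_of_nonneg_left ?_ (by positivity)
  rw [sum_PRC_powersetCard, le_inv_mul_iff₀ hC]
  exact le_of_mul_le_mul_left key hC

/-- Symmetrization upper bound: for `N = m + u`, `m = u`, `m` even, the
expected supremum of the empirical process when sampling `m` points
without replacement is at most the expected PRC, for any `1 ≤ n ≤ m-1`. -/
theorem symmetrization_upper {α : Type*} [DecidableEq α]
    (ZN : Finset α) (F : Finset (α → ℝ)) (hF : F.Nonempty)
    (m u N n : ℕ) (hN : ZN.card = N) (hNmu : N = m + u) (hmu : m = u)
    (hme : Even m) (hn : 1 ≤ n) (hnm : n ≤ m - 1) :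
    (1 / (N.choose m : ℝ)) *
        ∑ Zm ∈ ZN.powersetCard m,
          F.sup' hF (fun f => favg f (ZN \ Zm) - favg f Zm)
      ≤ (1 / (N.choose m : ℝ)) *
          ∑ Zm ∈ ZN.powersetCard m, PRC F hF Zm n :=
  symmetrization_upper_general ZN F hF m u N n hN hNmu hmu hn hnm
end

section
/- Let Z_N be a finite set of N = m + u elements with m = u and m even, and F a set of functions from Z_N to ℝ. Let Z_m be a uniformly random m-element subset of Z_N and Z_u its complement. Then (1/2) E[Q_{m,m/2}(F, Z_m)] ≤ E[sup_{f∈F} (avg_f(Z_u) − avg_f(Z_m))], where Q_{m,m/2} is the permutational Rademacher complexity with n = m/2. -/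
open Finset

section Aux

variable {α : Type*} [DecidableEq α]

lemma favg_union_half (f : α → ℝ) {A B : Finset α} (hd : Disjoint A B)
    (hc : A.card = B.card) :
    favg f (A ∪ B) = (favg f A + favg f B) / 2 := by
  rcases Nat.eq_zero_or_pos B.card with h0 | hpos
  · have hA : A = ∅ := card_eq_zero.mp (hc.trans h0)
    have hB : B = ∅ := card_eq_zero.mp h0
    simp [hA, hB, favg]
  · unfold favg
    rw [sum_union hd, card_union_of_disjoint hd, hc]
    have hB : (0:ℝ) < (B.card : ℝ) := by exact_mod_cast hpos
    push_cast
    rw [div_add_div _ _ (ne_of_gt hB) (ne_of_gt hB), div_div,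
      div_eq_div_iff (by positivity) (by positivity)]
    ring

lemma sum_swap_zero (f : α → ℝ) {Zu : Finset α} {k : ℕ} (h : Zu.card = 2 * k) :
    ∑ C ∈ Zu.powersetCard k, (favg f (Zu \ C) - favg f C) = 0 := by
  have hmem : ∀ C ∈ Zu.powersetCard k, Zu \ C ∈ Zu.powersetCard k := by
    intro C hC
    obtain ⟨hCsub, hCcard⟩ := mem_powersetCard.mp hC
    exact mem_powersetCard.mpr ⟨sdiff_subset, by rw [card_sdiff_of_subset hCsub]; omega⟩
  have hinv : ∀ C ∈ Zu.powersetCard k, Zu \ (Zu \ C) = C := by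
    intro C hC
    exact Finset.sdiff_sdiff_eq_self (mem_powersetCard.mp hC).1
  have h2 : ∑ C ∈ Zu.powersetCard k, (favg f (Zu \ C) - favg f C)
      = ∑ C ∈ Zu.powersetCard k, (favg f C - favg f (Zu \ C)) :=
    Finset.sum_nbij' (fun C => Zu \ C) (fun C => Zu \ C) hmem hmem hinv hinv
      (fun C hC => by rw [hinv C hC])
  have h3 : ∑ C ∈ Zu.powersetCard k, (favg f (Zu \ C) - favg f C)
      + ∑ C ∈ Zu.powersetCard k, (favg f C - favg f (Zu \ C)) = 0 := by
    rw [← sum_add_distrib]; simp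
  linarith

lemma count_lemma (ZN : Finset α) (m k : ℕ) (hmk : m = 2 * k)
    (hN : ZN.card = 2 * m) (G : Finset α → ℝ) :
    ∑ Zm ∈ ZN.powersetCard m, ∑ S ∈ Zm.powersetCard k,
        ∑ C ∈ (ZN \ Zm).powersetCard k, G (S ∪ C)
      = (m.choose k : ℝ)^2 * ∑ Zm ∈ ZN.powersetCard m, G Zm := by
  set I := (ZN.powersetCard m).sigma
    (fun Zm => (Zm.powersetCard k) ×ˢ ((ZN \ Zm).powersetCard k)) with hI
  have hmemI : ∀ a : (_ : Finset α) × Finset α × Finset α, a ∈ I ↔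
      (a.1 ⊆ ZN ∧ a.1.card = m) ∧ (a.2.1 ⊆ a.1 ∧ a.2.1.card = k)
        ∧ (a.2.2 ⊆ ZN \ a.1 ∧ a.2.2.card = k) := by
    intro a
    simp [hI, mem_sigma, mem_product, mem_powersetCard, and_assoc]
  have hmap : ∀ a ∈ I, (⟨a.2.1 ∪ a.2.2, (a.2.1, a.1 \ a.2.1)⟩ :
      (_ : Finset α) × Finset α × Finset α) ∈ I := by
    rintro ⟨Zm, S, C⟩ ha
    rw [hmemI] at ha ⊢
    dsimp only at ha ⊢
    obtain ⟨⟨hZm, hZmc⟩, ⟨hS, hSc⟩, ⟨hC, hCc⟩⟩ := ha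
    have hdSC : Disjoint S C := Finset.disjoint_sdiff.mono hS hC
    refine ⟨⟨?_, ?_⟩, ⟨subset_union_left, hSc⟩, ⟨?_, ?_⟩⟩
    · exact union_subset (hS.trans hZm) (hC.trans sdiff_subset)
    · rw [card_union_of_disjoint hdSC]; omega
    · intro x hx
      obtain ⟨hxZm, hxS⟩ := mem_sdiff.mp hx
      refine mem_sdiff.mpr ⟨hZm hxZm, ?_⟩
      rw [mem_union]
      rintro (h | h)
      · exact hxS h
      · exact (mem_sdiff.mp (hC h)).2 hxZm
    · rw [card_sdiff_of_subset hS]; omega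
  have hinv : ∀ a ∈ I, (⟨a.2.1 ∪ (a.1 \ a.2.1), (a.2.1, (a.2.1 ∪ a.2.2) \ a.2.1)⟩ :
      (_ : Finset α) × Finset α × Finset α) = a := by
    rintro ⟨Zm, S, C⟩ ha
    rw [hmemI] at ha
    dsimp only at ha
    obtain ⟨⟨hZm, hZmc⟩, ⟨hS, hSc⟩, ⟨hC, hCc⟩⟩ := ha
    have hdSC : Disjoint S C := Finset.disjoint_sdiff.mono hS hC
    have h1 : S ∪ (Zm \ S) = Zm := union_sdiff_of_subset hS
    have h2 : (S ∪ C) \ S = C := union_sdiff_cancel_left hdSC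
    simp only [h1, h2]
  have main : ∑ a ∈ I, G (a.2.1 ∪ a.2.2) = ∑ a ∈ I, G a.1 :=
    Finset.sum_nbij' (fun a => ⟨a.2.1 ∪ a.2.2, (a.2.1, a.1 \ a.2.1)⟩)
      (fun a => ⟨a.2.1 ∪ a.2.2, (a.2.1, a.1 \ a.2.1)⟩)
      hmap hmap (fun a ha => hinv a ha) (fun a ha => hinv a ha)
      (fun a _ => rfl)
  have hL : ∑ a ∈ I, G (a.2.1 ∪ a.2.2)
      = ∑ Zm ∈ ZN.powersetCard m, ∑ S ∈ Zm.powersetCard k,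
          ∑ C ∈ (ZN \ Zm).powersetCard k, G (S ∪ C) := by
    rw [hI, Finset.sum_sigma]
    exact sum_congr rfl fun Zm _ => by rw [Finset.sum_product]
  have hR : ∑ a ∈ I, G a.1
      = (m.choose k : ℝ)^2 * ∑ Zm ∈ ZN.powersetCard m, G Zm := by
    rw [hI, Finset.sum_sigma]
    rw [Finset.mul_sum]
    refine sum_congr rfl fun Zm hZm => ?_
    obtain ⟨hsub, hcard⟩ := mem_powersetCard.mp hZm
    have hcZu : (ZN \ Zm).card = m := by rw [card_sdiff_of_subset hsub]; omega
    dsimp only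
    rw [Finset.sum_const, card_product, card_powersetCard, card_powersetCard,
      hcard, hcZu, nsmul_eq_mul]
    push_cast
    ring
  rw [← hL, main, hR]

end Aux

/-- Desymmetrization lower bound: for `N = m + u`, `m = u`, `m` even,
half the expected PRC (with `n = m/2`) is at most the expected supremum of
the empirical process when sampling `m` points without replacement. -/
theorem desymmetrization_lower {α : Type*} [DecidableEq α]
    (ZN : Finset α) (F : Finset (α → ℝ)) (hF : F.Nonempty)
    (m u N : ℕ) (hN : ZN.card = N) (hNmu : N = m + u) (hmu : m = u)
    (hme : Even m) (hm : 0 < m) :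
    (1 / 2) * ((1 / (N.choose m : ℝ)) *
        ∑ Zm ∈ ZN.powersetCard m, PRC F hF Zm (m / 2))
      ≤ (1 / (N.choose m : ℝ)) *
          ∑ Zm ∈ ZN.powersetCard m,
            F.sup' hF (fun f => favg f (ZN \ Zm) - favg f Zm) := by
  obtain ⟨k, hk⟩ := hme
  have hmk : m = 2 * k := by omega
  have hk2 : m / 2 = k := by omega
  have hN2 : ZN.card = 2 * m := by omega
  set G : Finset α → ℝ :=
    fun T => F.sup' hF (fun f => favg f (ZN \ T) - favg f T) with hG
  have hc : (0:ℝ) < m.choose k := by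
    exact_mod_cast Nat.choose_pos (by omega)
  -- main per-(Zm, S) bound
  have step1 : ∀ Zm ∈ ZN.powersetCard m, ∀ S ∈ Zm.powersetCard k,
      F.sup' hF (fun f => favg f (Zm \ S) - favg f S)
        ≤ (1 / (m.choose k : ℝ)) *
            ∑ C ∈ (ZN \ Zm).powersetCard k, 2 * G (S ∪ C) := by
    intro Zm hZm S hS
    obtain ⟨hZmsub, hZmcard⟩ := mem_powersetCard.mp hZm
    obtain ⟨hSsub, hScard⟩ := mem_powersetCard.mp hS
    have hZu : (ZN \ Zm).card = m := by rw [card_sdiff_of_subset hZmsub]; omega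
    apply Finset.sup'_le
    intro f hf
    have hident : ∀ C ∈ (ZN \ Zm).powersetCard k,
        2 * (favg f (ZN \ (S ∪ C)) - favg f (S ∪ C))
          = (favg f (Zm \ S) - favg f S)
            + (favg f ((ZN \ Zm) \ C) - favg f C) := by
      intro C hC
      obtain ⟨hCsub, hCcard⟩ := mem_powersetCard.mp hC
      have hdSC : Disjoint S C := Finset.disjoint_sdiff.mono hSsub hCsub
      have hsetid : ZN \ (S ∪ C) = (Zm \ S) ∪ ((ZN \ Zm) \ C) := by
        ext x
        simp only [mem_sdiff, mem_union, not_or]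
        constructor
        · rintro ⟨hxN, hxS, hxC⟩
          by_cases hxm : x ∈ Zm
          · exact Or.inl ⟨hxm, hxS⟩
          · exact Or.inr ⟨⟨hxN, hxm⟩, hxC⟩
        · rintro (⟨hxm, hxS⟩ | ⟨⟨hxN, hxm⟩, hxC⟩)
          · refine ⟨hZmsub hxm, hxS, fun h => ?_⟩
            exact (mem_sdiff.mp (hCsub h)).2 hxm
          · refine ⟨hxN, fun h => hxm (hSsub h), hxC⟩
      have hd2 : Disjoint (Zm \ S) ((ZN \ Zm) \ C) :=
        (Finset.disjoint_sdiff.mono sdiff_subset sdiff_subset)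
      have hc1 : (Zm \ S).card = ((ZN \ Zm) \ C).card := by
        rw [card_sdiff_of_subset hSsub, card_sdiff_of_subset hCsub, hZu, hZmcard, hScard, hCcard]
      rw [hsetid, favg_union_half f hdSC (hScard.trans hCcard.symm),
        favg_union_half f hd2 hc1]
      ring
    have hsum : ∑ C ∈ (ZN \ Zm).powersetCard k,
        2 * (favg f (ZN \ (S ∪ C)) - favg f (S ∪ C))
          = (m.choose k : ℝ) * (favg f (Zm \ S) - favg f S) := by
      rw [Finset.sum_congr rfl hident, sum_add_distrib,
        sum_swap_zero f (by omega : (ZN \ Zm).card = 2 * k),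
        Finset.sum_const, card_powersetCard, hZu, nsmul_eq_mul]
      ring
    have heq : favg f (Zm \ S) - favg f S
        = (1 / (m.choose k : ℝ)) * ∑ C ∈ (ZN \ Zm).powersetCard k,
            2 * (favg f (ZN \ (S ∪ C)) - favg f (S ∪ C)) := by
      rw [hsum]
      field_simp
    rw [heq]
    apply mul_le_mul_of_nonneg_left _ (by positivity)
    apply Finset.sum_le_sum
    intro C hC
    have hle := Finset.le_sup' (fun f => favg f (ZN \ (S ∪ C)) - favg f (S ∪ C)) hf
    simp only [hG]
    linarith
  -- summing the bound
  have hT := count_lemma ZN m k hmk hN2 G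
  have hPRC : ∑ Zm ∈ ZN.powersetCard m, PRC F hF Zm k
      ≤ 2 * ∑ Zm ∈ ZN.powersetCard m, G Zm := by
    have hstep2 : ∀ Zm ∈ ZN.powersetCard m, PRC F hF Zm k
        ≤ (2 / (m.choose k : ℝ)^2) * ∑ S ∈ Zm.powersetCard k,
            ∑ C ∈ (ZN \ Zm).powersetCard k, G (S ∪ C) := by
      intro Zm hZm
      obtain ⟨hZmsub, hZmcard⟩ := mem_powersetCard.mp hZm
      unfold PRC
      rw [hZmcard]
      calc (1 / (m.choose k : ℝ)) * ∑ S ∈ Zm.powersetCard k,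
            (F.sup' hF fun f => favg f (Zm \ S) - favg f S)
          ≤ (1 / (m.choose k : ℝ)) * ∑ S ∈ Zm.powersetCard k,
              ((1 / (m.choose k : ℝ)) *
                ∑ C ∈ (ZN \ Zm).powersetCard k, 2 * G (S ∪ C)) := by
            apply mul_le_mul_of_nonneg_left _ (by positivity)
            exact Finset.sum_le_sum (step1 Zm hZm)
        _ = (2 / (m.choose k : ℝ)^2) * ∑ S ∈ Zm.powersetCard k,
              ∑ C ∈ (ZN \ Zm).powersetCard k, G (S ∪ C) := by
            simp only [← Finset.mul_sum]
            ring
    calc ∑ Zm ∈ ZN.powersetCard m, PRC F hF Zm k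
        ≤ ∑ Zm ∈ ZN.powersetCard m, ((2 / (m.choose k : ℝ)^2) *
            ∑ S ∈ Zm.powersetCard k,
              ∑ C ∈ (ZN \ Zm).powersetCard k, G (S ∪ C)) :=
          Finset.sum_le_sum hstep2
      _ = (2 / (m.choose k : ℝ)^2) * ∑ Zm ∈ ZN.powersetCard m,
            ∑ S ∈ Zm.powersetCard k,
              ∑ C ∈ (ZN \ Zm).powersetCard k, G (S ∪ C) := by
          rw [Finset.mul_sum]
      _ = (2 / (m.choose k : ℝ)^2) * ((m.choose k : ℝ)^2 *
            ∑ Zm ∈ ZN.powersetCard m, G Zm) := by rw [hT]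
      _ = 2 * ∑ Zm ∈ ZN.powersetCard m, G Zm := by
          field_simp
  rw [hk2]
  have hcN : (0:ℝ) ≤ 1 / (N.choose m : ℝ) := by positivity
  calc (1 / 2) * ((1 / (N.choose m : ℝ)) *
        ∑ Zm ∈ ZN.powersetCard m, PRC F hF Zm k)
      ≤ (1 / 2) * ((1 / (N.choose m : ℝ)) *
          (2 * ∑ Zm ∈ ZN.powersetCard m, G Zm)) := by
        apply mul_le_mul_of_nonneg_left _ (by norm_num)
        exact mul_le_mul_of_nonneg_left hPRC hcN
    _ = (1 / (N.choose m : ℝ)) * ∑ Zm ∈ ZN.powersetCard m, G Zm := by ring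
end

section
/- Let m = 2n and let η = (η_1,...,η_m) be a uniformly random permutation of a vector consisting of n entries equal to +1 and n entries equal to −1. Let ε = (ε_1,...,ε_m) be i.i.d. uniform ±1 signs, and define t(ε) to be a uniformly random element of the set T(ε) of vectors in S_m = {v ∈ {−1,+1}^m : Σ v_i = 0} closest to ε in Hamming distance. Then t(ε) has the same distribution as η, i.e., t(ε) is uniformly distributed on S_m. -/
/-!
Permuting coordinates preserves Hamming distance and the balanced set, so it commutes with the
rounding `ε ↦ t(ε)`; as `ε` is uniform, the law of `t(ε)` is invariant under coordinate
permutations. These act transitively on balanced vectors, so that law is uniform.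
-/

open Finset
open scoped Classical

/-- Sign vectors on `Fin m` with exactly `n` coordinates equal to `+1`
(encoded as `true`). -/
noncomputable def balanced (m n : ℕ) : Finset (Fin m → Bool) :=
  Finset.univ.filter fun v => (Finset.univ.filter fun i => v i = true).card = n

/-- Hamming distance between two sign vectors. -/
def hamm {m : ℕ} (v w : Fin m → Bool) : ℕ :=
  (Finset.univ.filter fun i => v i ≠ w i).card

/-- `Tset m n v`: the balanced sign vectors at minimal Hamming distance
from `v`. -/
noncomputable def Tset (m n : ℕ) (v : Fin m → Bool) : Finset (Fin m → Bool) :=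
  (balanced m n).filter fun w => ∀ w' ∈ balanced m n, hamm v w ≤ hamm v w'

lemma card_balanced (m n : ℕ) : #(balanced m n) = m.choose n := by
  calc #(balanced m n) = #((univ : Finset (Fin m)).powersetCard n) := by
        refine card_nbij' (fun v => univ.filter (v · = true)) (fun s i => decide (i ∈ s))
          ?_ ?_ ?_ ?_ <;> intro x hx
        · simpa [balanced] using hx
        · simpa [balanced] using (mem_powersetCard.1 (mem_coe.1 hx)).2
        · funext i; cases h : x i <;> simp [h]
        · ext i; simp
    _ = m.choose n := by simp

lemma Tset_subset_balanced (m n : ℕ) (v : Fin m → Bool) : Tset m n v ⊆ balanced m n :=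
  filter_subset _ _

lemma Tset_nonempty {m n : ℕ} (hnm : n ≤ m) (v : Fin m → Bool) : (Tset m n v).Nonempty := by
  have hbal : (balanced m n).Nonempty := by
    rw [← card_pos, card_balanced]
    exact Nat.choose_pos hnm
  obtain ⟨w, hw, hmin⟩ := exists_min_image (balanced m n) (hamm v) hbal
  exact ⟨w, mem_filter.2 ⟨hw, hmin⟩⟩

lemma card_subtype_eq_of_mem_balanced {m n : ℕ} {v : Fin m → Bool} (hv : v ∈ balanced m n)
    (c : Bool) : Fintype.card {i // v i = c} = if c then n else m - n := by
  simp only [balanced, mem_filter, mem_univ, true_and] at hv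
  cases c
  · have := card_filter_add_card_filter_not (s := univ) (fun i => v i = true)
    simp only [Bool.not_eq_true, card_univ, Fintype.card_fin] at this
    simp only [Fintype.card_subtype, Bool.false_eq_true, ↓reduceIte]
    omega
  · simp [Fintype.card_subtype, hv]

section Relabel

variable {m : ℕ} (σ : Equiv.Perm (Fin m))

def relabel : (Fin m → Bool) ≃ (Fin m → Bool) :=
  σ.symm.arrowCongr (Equiv.refl Bool)

@[simp]
lemma relabel_apply (v : Fin m → Bool) : relabel σ v = v ∘ σ := rfl

lemma card_filter_comp_perm (p : Fin m → Prop) [DecidablePred p] :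
    #(univ.filter fun i => p (σ i)) = #(univ.filter p) :=
  card_equiv σ (by simp)

lemma relabel_mem_balanced {n : ℕ} (v : Fin m → Bool) :
    relabel σ v ∈ balanced m n ↔ v ∈ balanced m n := by
  simp [balanced, card_filter_comp_perm σ (v · = true)]

lemma hamm_relabel (v w : Fin m → Bool) : hamm (relabel σ v) (relabel σ w) = hamm v w :=
  card_filter_comp_perm σ fun i => v i ≠ w i

lemma relabel_mem_Tset {n : ℕ} (v w : Fin m → Bool) :
    relabel σ w ∈ Tset m n (relabel σ v) ↔ w ∈ Tset m n v := by
  simp only [Tset, mem_filter, relabel_mem_balanced]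
  refine and_congr_right fun _ => ?_
  rw [← (relabel σ).forall_congr_right]
  simp only [relabel_mem_balanced, hamm_relabel]

lemma card_Tset_relabel {n : ℕ} (v : Fin m → Bool) :
    #(Tset m n (relabel σ v)) = #(Tset m n v) :=
  (card_equiv (relabel σ) fun w => (relabel_mem_Tset σ v w).symm).symm

end Relabel

lemma exists_relabel_eq {m n : ℕ} {e e' : Fin m → Bool} (he : e ∈ balanced m n)
    (he' : e' ∈ balanced m n) : ∃ σ, relabel σ e = e' := by
  have hfiber (c : Bool) : Fintype.card {i // e' i = c} = Fintype.card {i // e i = c} := by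
    rw [card_subtype_eq_of_mem_balanced he, card_subtype_eq_of_mem_balanced he']
  exact ⟨Equiv.ofFiberEquiv fun c => Fintype.equivOfCardEq (hfiber c),
    funext (Equiv.ofFiberEquiv_map _)⟩

/-- `2 ^ m` times the probability that `t(ε) = e` for a uniform `ε`. -/
noncomputable def roundingWeight (m n : ℕ) (e : Fin m → Bool) : ℝ :=
  ∑ ε : Fin m → Bool, if e ∈ Tset m n ε then (1 : ℝ) / #(Tset m n ε) else 0

lemma roundingWeight_relabel {m n : ℕ} (σ : Equiv.Perm (Fin m)) (e : Fin m → Bool) :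
    roundingWeight m n (relabel σ e) = roundingWeight m n e :=
  (Fintype.sum_equiv (relabel σ) _ _ fun ε => by
    simp only [relabel_mem_Tset, card_Tset_relabel]).symm

lemma sum_roundingWeight {m n : ℕ} (hnm : n ≤ m) :
    ∑ e ∈ balanced m n, roundingWeight m n e = 2 ^ m := by
  have hmass (ε : Fin m → Bool) :
      ∑ e ∈ balanced m n, (if e ∈ Tset m n ε then (1 : ℝ) / #(Tset m n ε) else 0) = 1 := by
    have hpos : (0 : ℝ) < #(Tset m n ε) := by exact_mod_cast (Tset_nonempty hnm ε).card_pos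
    rw [sum_ite_mem, inter_eq_right.2 (Tset_subset_balanced m n ε), sum_const, nsmul_eq_mul,
      mul_one_div_cancel hpos.ne']
  simp only [roundingWeight]
  rw [sum_comm, Fintype.sum_congr _ _ hmass]
  simp

lemma roundingWeight_eq {m n : ℕ} (hnm : n ≤ m) {e : Fin m → Bool} (he : e ∈ balanced m n) :
    roundingWeight m n e = 2 ^ m / m.choose n := by
  have hconst : ∀ e' ∈ balanced m n, roundingWeight m n e' = roundingWeight m n e := by
    intro e' he'
    obtain ⟨σ, rfl⟩ := exists_relabel_eq he he'
    exact roundingWeight_relabel σ e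
  have hchoose : (m.choose n : ℝ) ≠ 0 := by exact_mod_cast (Nat.choose_pos hnm).ne'
  rw [← sum_roundingWeight hnm, sum_congr rfl hconst, sum_const, card_balanced, nsmul_eq_mul,
    mul_div_cancel_left₀ _ hchoose]

theorem coupling_uniform_general (n : ℕ) (m : ℕ) (hm : m = 2 * n)
    (e : Fin m → Bool) (he : e ∈ balanced m n) :
    (∑ ε : Fin m → Bool,
        if e ∈ Tset m n ε then (1 : ℝ) / (Tset m n ε).card else 0) / 2 ^ m
      = 1 / (m.choose n : ℝ) := by
  change roundingWeight m n e / 2 ^ m = _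
  rw [roundingWeight_eq (by omega) he, div_right_comm, div_self (by positivity)]

/-- Coupling lemma: if `ε` is a uniform sign vector and `t(ε)` is chosen
uniformly from `Tset m n ε`, then `t(ε)` is uniformly distributed on the set
of balanced sign vectors: for every balanced `e`,
`P(t(ε) = e) = 1 / C(m,n)`. -/
theorem coupling_uniform (n : ℕ) (hn : 0 < n) (m : ℕ) (hm : m = 2 * n)
    (e : Fin m → Bool) (he : e ∈ balanced m n) :
    (∑ ε : Fin m → Bool,
        if e ∈ Tset m n ε then (1 : ℝ) / (Tset m n ε).card else 0) / 2 ^ m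
      = 1 / (m.choose n : ℝ) :=
  coupling_uniform_general n m hm e he
end

section
/- Let m = 2n, ε = (ε_1,...,ε_m) be i.i.d. uniform ±1 signs, and t(ε) a uniformly random element of the set of balanced sign vectors (equal numbers of +1 and −1) closest to ε in Hamming distance. Then for every coordinate q ∈ {1,...,m}, E[ε_q | t(ε)] = (1 − 2^{−m} · binom(m, n)) · t_q(ε). -/
open Finset
open scoped Classical

/-- Real-valued sign of a Boolean sign: `+1` for `true`, `−1` for `false`. -/
def bsgn (b : Bool) : ℝ := if b then 1 else -1

/-! Write `ε` as `e` with the coordinates of a set `D` flipped. Then `e ∈ T(ε)` exactly when `D`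
lies inside `{e = +1}` or inside `{e = -1}` (two sets of size `n`), and in that case
`|T(ε)| = C(n + |D|, n)`. Summing over such `D`, the denominator is
`2 ∑_j C(n,j) / C(n+j,n) - 1 = 4^n / C(2n,n)`, while the sets `D ∋ q`, on which `ε_q = -t_q`,
carry the telescoping weight `∑_j C(n-1,j) / C(n+j+1,n) = 1/2`. Hence the numerator is
`t_q (4^n / C(2n,n) - 1)`. -/

theorem two_mul_sum_range_choose_halfway (n : ℕ) :
    2 * ∑ i ∈ range (n + 1), (2 * n).choose i = 4 ^ n + (2 * n).choose n := by
  -- Pascal's rule: `∑_{i ≤ n} C(2n+1, i) = ∑_{i < n} C(2n, i) + ∑_{i ≤ n} C(2n, i)`.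
  have h := Nat.sum_range_choose_halfway n
  rw [sum_range_succ'] at h
  simp only [Nat.choose_succ_succ, Nat.succ_eq_add_one, sum_add_distrib, Nat.choose_zero_right] at h
  have h' := sum_range_succ' (fun i => (2 * n).choose i) n
  have h'' := sum_range_succ (fun i => (2 * n).choose i) n
  simp only [Nat.choose_zero_right] at h' h''
  omega

theorem sum_range_choose_two_mul_add (n : ℕ) :
    ∑ j ∈ range (n + 1), (2 * n).choose (n + j)
      = ∑ i ∈ range (n + 1), (2 * n).choose i := by
  rw [← sum_range_reflect]
  refine sum_congr rfl fun j hj => ?_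
  have hj := mem_range.1 hj
  rw [← Nat.choose_symm (by omega)]
  congr 1
  omega

theorem choose_div_choose_add (n j : ℕ) :
    (n.choose j : ℝ) / (n + j).choose n = ((2 * n).choose (n + j) : ℝ) / (2 * n).choose n := by
  have h := Nat.choose_mul (n := 2 * n) (k := n + j) (s := n) (by omega)
  rw [show 2 * n - n = n by omega, Nat.add_sub_cancel_left] at h
  rw [div_eq_div_iff (Nat.cast_ne_zero.2 (Nat.choose_pos (by omega)).ne')
    (Nat.cast_ne_zero.2 (Nat.choose_pos (by omega)).ne')]
  exact_mod_cast (by rw [mul_comm, h, mul_comm] : n.choose j * (2 * n).choose n = _)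

theorem two_mul_sum_choose_div_choose_add_sub_one (n : ℕ) :
    2 * ∑ j ∈ range (n + 1), (n.choose j : ℝ) / (n + j).choose n - 1
      = 4 ^ n / (2 * n).choose n := by
  have h : 2 * ∑ j ∈ range (n + 1), ((2 * n).choose (n + j) : ℝ)
      = 4 ^ n + (2 * n).choose n := by
    exact_mod_cast sum_range_choose_two_mul_add n ▸ two_mul_sum_range_choose_halfway n
  have hC : ((2 * n).choose n : ℝ) ≠ 0 := Nat.cast_ne_zero.2 (Nat.choose_pos (by omega)).ne'
  simp_rw [choose_div_choose_add n, ← sum_div, ← mul_div_assoc, h]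
  field_simp
  ring

theorem sum_choose_div_choose_add_succ (k : ℕ) :
    ∑ j ∈ range (k + 1), (k.choose j : ℝ) / (k + 1 + (j + 1)).choose (k + 1) = 1 / 2 := by
  let f : ℕ → ℝ := fun j => k.choose j / (2 * (k + 1 + j).choose (k + 1))
  have hf : ∀ j ∈ range (k + 1),
      (k.choose j : ℝ) / (k + 1 + (j + 1)).choose (k + 1) = f j - f (j + 1) := by
    intro j hj
    have hjk : j ≤ k := Nat.lt_succ_iff.1 (mem_range.1 hj)
    have hc : ((k + 1 + j).choose (k + 1) : ℝ) ≠ 0 :=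
      Nat.cast_ne_zero.2 (Nat.choose_pos (by omega)).ne'
    have hb : (k.choose (j + 1) : ℝ) = k.choose j * (k - j) / (j + 1) := by
      rw [eq_div_iff (by positivity)]
      exact_mod_cast Nat.choose_succ_right_eq k j
    have hd : ((k + 1 + (j + 1)).choose (k + 1) : ℝ)
        = (k + 1 + j).choose (k + 1) * (k + 1 + j + 1) / (j + 1) := by
      rw [eq_div_iff (by positivity)]
      have h := Nat.choose_mul_succ_eq (k + 1 + j) (k + 1)
      rw [show k + 1 + j + 1 - (k + 1) = j + 1 by omega] at h
      exact_mod_cast h.symm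
    simp only [f]
    rw [hb, hd]
    field_simp
    ring
  rw [sum_congr rfl hf, sum_range_sub']
  simp [f]

noncomputable def ones {m : ℕ} (v : Fin m → Bool) : Finset (Fin m) :=
  univ.filter fun i => v i = true

section Hamming

variable {m n : ℕ} {v w e : Fin m → Bool}

@[simp] lemma mem_ones {i : Fin m} : i ∈ ones v ↔ v i = true := by simp [ones]

lemma mem_balanced : v ∈ balanced m n ↔ #(ones v) = n := by simp [balanced, ones]

noncomputable def onesEquiv : (Fin m → Bool) ≃ Finset (Fin m) where
  toFun := ones
  invFun s i := decide (i ∈ s)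
  left_inv v := by funext i; simp
  right_inv s := by ext i; simp

@[simp] lemma onesEquiv_apply (v : Fin m → Bool) : onesEquiv v = ones v := rfl

@[simp] lemma ones_onesEquiv_symm (s : Finset (Fin m)) : ones (onesEquiv.symm s) = s :=
  onesEquiv.apply_symm_apply s

lemma hamm_eq_card_sdiff_add_card_sdiff (v w : Fin m → Bool) :
    hamm v w = #(ones v \ ones w) + #(ones w \ ones v) := by
  rw [← card_union_of_disjoint disjoint_sdiff_sdiff, hamm]
  congr 1
  ext i
  cases hv : v i <;> cases hw : w i <;> simp [hv, hw]

lemma card_ones_add_card_sdiff (v w : Fin m → Bool) :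
    #(ones v) + #(ones w \ ones v) = #(ones w) + #(ones v \ ones w) := by
  rw [add_comm, card_sdiff_add_card, add_comm, card_sdiff_add_card, union_comm]

lemma exists_balanced_subset_or_superset (hnm : n ≤ m) (v : Fin m → Bool) :
    ∃ w ∈ balanced m n, ones w ⊆ ones v ∨ ones v ⊆ ones w := by
  obtain ⟨s, hs, hsv⟩ : ∃ s : Finset (Fin m), #s = n ∧ (s ⊆ ones v ∨ ones v ⊆ s) := by
    rcases le_total n #(ones v) with h | h
    · obtain ⟨s, hs, hsn⟩ := exists_subset_card_eq h
      exact ⟨s, hsn, .inl hs⟩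
    · obtain ⟨s, hs, -, hsn⟩ := exists_subsuperset_card_eq (subset_univ _) h (by simpa)
      exact ⟨s, hsn, .inr hs⟩
  refine ⟨onesEquiv.symm s, ?_⟩
  rw [mem_balanced]
  simpa using ⟨hs, hsv⟩

lemma mem_Tset_iff (hnm : n ≤ m) :
    w ∈ Tset m n v ↔ w ∈ balanced m n ∧ (ones w ⊆ ones v ∨ ones v ⊆ ones w) := by
  -- For balanced `w`, `hamm v w ≥ |#(ones v) - n|`, with equality iff `w` is comparable with `v`;
  -- a comparable balanced `w₀` exists, so the minimum is `|#(ones v) - n|`.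
  obtain ⟨w₀, hw₀, h₀⟩ := exists_balanced_subset_or_superset hnm v
  have hsub_iff : ∀ w : Fin m → Bool, (ones w ⊆ ones v ∨ ones v ⊆ ones w) ↔
      (#(ones w \ ones v) = 0 ∨ #(ones v \ ones w) = 0) := by
    simp [sdiff_eq_empty_iff_subset]
  have hdist : ∀ w ∈ balanced m n, hamm v w = #(ones v \ ones w) + #(ones w \ ones v) ∧
      #(ones v) + #(ones w \ ones v) = n + #(ones v \ ones w) := fun w hw =>
    ⟨hamm_eq_card_sdiff_add_card_sdiff v w, mem_balanced.1 hw ▸ card_ones_add_card_sdiff v w⟩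
  rw [Tset, mem_filter, hsub_iff]
  have h₀' := (hsub_iff w₀).1 h₀
  have hd₀ := hdist w₀ hw₀
  refine and_congr_right fun hw => ⟨fun hmin => ?_, fun h w' hw' => ?_⟩
  · have := hmin w₀ hw₀
    have := hdist w hw
    omega
  · have := hdist w hw
    have := hdist w' hw'
    omega

lemma card_filter_balanced_ones_subset (s : Finset (Fin m)) :
    #{w ∈ balanced m n | ones w ⊆ s} = (#s).choose n := by
  rw [← card_powersetCard]
  exact card_equiv onesEquiv fun w => by simp [mem_balanced, and_comm]

lemma card_filter_balanced_subset_ones (hnm : n ≤ m) (s : Finset (Fin m)) :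
    #{w ∈ balanced m n | s ⊆ ones w} = (m - #s).choose (m - n) := by
  have hsc : #sᶜ = m - #s := by rw [card_compl, Fintype.card_fin]
  rw [← hsc, ← card_powersetCard]
  refine card_equiv (onesEquiv.trans (compl_involutive.toPerm _)) fun w => ?_
  have := card_le_card (subset_univ (ones w))
  simp only [mem_filter, mem_balanced, mem_powersetCard, Equiv.trans_apply, onesEquiv_apply,
    Function.Involutive.coe_toPerm, compl_subset_compl, card_compl, card_univ, Fintype.card_fin]
    at this ⊢
  rw [and_comm, and_congr_right_iff]
  omega

lemma Tset_eq_filter_ones_subset (hnm : n ≤ m) (h : n ≤ #(ones v)) :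
    Tset m n v = {w ∈ balanced m n | ones w ⊆ ones v} := by
  ext w
  rw [mem_Tset_iff hnm, mem_filter, and_congr_right_iff, or_iff_left_iff_imp]
  intro hw hvw
  rw [eq_of_subset_of_card_le hvw (mem_balanced.1 hw ▸ h)]

lemma Tset_eq_filter_subset_ones (hnm : n ≤ m) (h : #(ones v) ≤ n) :
    Tset m n v = {w ∈ balanced m n | ones v ⊆ ones w} := by
  ext w
  rw [mem_Tset_iff hnm, mem_filter, and_congr_right_iff, or_iff_right_iff_imp]
  intro hw hwv
  rw [eq_of_subset_of_card_le hwv (mem_balanced.1 hw ▸ h)]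

lemma card_Tset_of_mem (hm : m = 2 * n) (he : e ∈ Tset m n v) :
    #(Tset m n v) = (n + hamm v e).choose n := by
  have hnm : n ≤ m := by omega
  obtain ⟨he, hcomp⟩ := (mem_Tset_iff hnm).1 he
  have hd := hamm_eq_card_sdiff_add_card_sdiff v e
  have hc := card_ones_add_card_sdiff v e
  have hen := mem_balanced.1 he
  rcases hcomp with hev | hve
  · have h₀ : #(ones e \ ones v) = 0 := card_eq_zero.2 (sdiff_eq_empty_iff_subset.2 hev)
    rw [Tset_eq_filter_ones_subset hnm (by omega), card_filter_balanced_ones_subset]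
    congr 1
    omega
  · have h₀ : #(ones v \ ones e) = 0 := card_eq_zero.2 (sdiff_eq_empty_iff_subset.2 hve)
    rw [Tset_eq_filter_subset_ones hnm (by omega), card_filter_balanced_subset_ones hnm]
    congr 1 <;> omega

end Hamming

section Flip

variable {m n : ℕ}

def flipOn (e : Fin m → Bool) : Finset (Fin m) ≃ (Fin m → Bool) where
  toFun D i := xor (e i) (decide (i ∈ D))
  invFun ε := univ.filter fun i => ε i ≠ e i
  left_inv D := by ext i; rw [mem_filter]; by_cases hi : i ∈ D <;> simp [hi]
  right_inv ε := by funext i; cases h : e i <;> cases h' : ε i <;> simp [h, h']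

@[simp] lemma flipOn_apply (e : Fin m → Bool) (D : Finset (Fin m)) (i : Fin m) :
    flipOn e D i = xor (e i) (decide (i ∈ D)) := rfl

lemma hamm_flipOn (e : Fin m → Bool) (D : Finset (Fin m)) : hamm (flipOn e D) e = #D := by
  rw [hamm]
  congr 1
  ext i
  rw [mem_filter]
  by_cases hi : i ∈ D <;> simp [hi]

lemma mem_Tset_flipOn {e : Fin m → Bool} (hnm : n ≤ m) (he : e ∈ balanced m n)
    (D : Finset (Fin m)) :
    e ∈ Tset m n (flipOn e D) ↔ D ∈ (ones e).powerset ∪ (ones e)ᶜ.powerset := by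
  rw [mem_Tset_iff hnm, and_iff_right he, mem_union, mem_powerset, mem_powerset, or_comm]
  refine or_congr ?_ ?_ <;> refine forall_congr' fun i => ?_ <;>
    by_cases hi : i ∈ D <;> simp [hi]

end Flip

lemma sum_Tset_eq_sum_powerset {m n : ℕ} (hm : m = 2 * n) {e : Fin m → Bool}
    (he : e ∈ balanced m n) (g : (Fin m → Bool) → ℝ) :
    ∑ ε, (if e ∈ Tset m n ε then g ε / #(Tset m n ε) else 0)
      = ∑ D ∈ (ones e).powerset ∪ (ones e)ᶜ.powerset,
          g (flipOn e D) / (n + #D).choose n := by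
  have hnm : n ≤ m := by omega
  rw [← (flipOn e).sum_comp, ← sum_filter]
  refine sum_congr (by ext D; simp [mem_Tset_flipOn hnm he]) fun D hD => ?_
  rw [card_Tset_of_mem hm ((mem_Tset_flipOn hnm he D).2 hD), hamm_flipOn]

lemma sum_powerset_union_powerset_compl {α β : Type*} [Fintype α] [DecidableEq α]
    [AddCommGroup β] (s : Finset α) (f : Finset α → β) :
    ∑ D ∈ s.powerset ∪ sᶜ.powerset, f D
      = ∑ D ∈ s.powerset, f D + ∑ D ∈ sᶜ.powerset, f D - f ∅ := by
  have : s.powerset ∩ sᶜ.powerset = {∅} := by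
    ext D
    simp only [mem_inter, mem_powerset, mem_singleton, ← subset_inter_iff, inter_compl,
      subset_empty]
  rw [← sum_union_inter, this, sum_singleton, add_sub_cancel_right]

lemma sum_powerset_inv_choose {α : Type*} {n : ℕ} (s : Finset α) (hs : #s = n) :
    ∑ D ∈ s.powerset, (1 : ℝ) / (n + #D).choose n
      = ∑ j ∈ range (n + 1), (n.choose j : ℝ) / (n + j).choose n := by
  rw [sum_powerset_apply_card (fun j => (1 : ℝ) / (n + j).choose n), hs]
  simp [div_eq_mul_inv]

lemma sum_powerset_ite_mem_inv_choose {α : Type*} [DecidableEq α] {n : ℕ} (s : Finset α)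
    (hs : #s = n) (q : α) :
    ∑ D ∈ s.powerset, (if q ∈ D then (1 : ℝ) / (n + #D).choose n else 0)
      = if q ∈ s then 1 / 2 else 0 := by
  split_ifs with hq
  · obtain ⟨k, rfl⟩ : ∃ k, n = k + 1 :=
      Nat.exists_eq_add_one.2 (hs ▸ card_pos.2 ⟨q, hq⟩)
    have hq' : q ∉ s.erase q := notMem_erase q s
    rw [← insert_erase hq, sum_powerset_insert hq',
      sum_eq_zero fun t ht => if_neg fun h => hq' (mem_powerset.1 ht h), zero_add,
      ← sum_choose_div_choose_add_succ k]
    have hcard : #(s.erase q) = k := by rw [card_erase_of_mem hq, hs, Nat.add_sub_cancel]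
    rw [sum_congr rfl fun t ht => by
      rw [if_pos (mem_insert_self q t), card_insert_of_notMem fun h => hq' (mem_powerset.1 ht h)],
      sum_powerset_apply_card (fun j => (1 : ℝ) / (k + 1 + (j + 1)).choose (k + 1)), hcard]
    simp [div_eq_mul_inv]
  · refine sum_eq_zero fun D hD => if_neg fun hqD => hq (mem_powerset.1 hD hqD)

lemma sum_powerset_union_powerset_compl_inv_choose {α : Type*} [Fintype α] [DecidableEq α]
    {n : ℕ} (s : Finset α) (hs : #s = n) (hsc : #sᶜ = n) :
    ∑ D ∈ s.powerset ∪ sᶜ.powerset, (1 : ℝ) / (n + #D).choose n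
      = 4 ^ n / (2 * n).choose n := by
  rw [sum_powerset_union_powerset_compl, sum_powerset_inv_choose _ hs,
    sum_powerset_inv_choose _ hsc, ← two_mul_sum_choose_div_choose_add_sub_one]
  simp only [card_empty, add_zero, Nat.choose_self, Nat.cast_one, div_one]
  ring

lemma sum_powerset_union_powerset_compl_ite_mem_inv_choose {α : Type*} [Fintype α]
    [DecidableEq α] {n : ℕ} (s : Finset α) (hs : #s = n) (hsc : #sᶜ = n) (q : α) :
    ∑ D ∈ s.powerset ∪ sᶜ.powerset, (if q ∈ D then (1 : ℝ) / (n + #D).choose n else 0)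
      = 1 / 2 := by
  rw [sum_powerset_union_powerset_compl, sum_powerset_ite_mem_inv_choose _ hs,
    sum_powerset_ite_mem_inv_choose _ hsc, if_neg (notMem_empty q)]
  by_cases hq : q ∈ s <;> simp [hq]

lemma bsgn_xor (b c : Bool) : bsgn (xor b c) = if c then -bsgn b else bsgn b := by
  cases b <;> cases c <;> simp [bsgn]

lemma sum_powerset_union_powerset_compl_bsgn_xor {α : Type*} [Fintype α] [DecidableEq α]
    {n : ℕ} (s : Finset α) (hs : #s = n) (hsc : #sᶜ = n) (q : α) (b : Bool) :
    ∑ D ∈ s.powerset ∪ sᶜ.powerset, bsgn (xor b (decide (q ∈ D))) / (n + #D).choose n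
      = bsgn b * (4 ^ n / (2 * n).choose n - 1) := by
  calc ∑ D ∈ s.powerset ∪ sᶜ.powerset, bsgn (xor b (decide (q ∈ D))) / (n + #D).choose n
      = ∑ D ∈ s.powerset ∪ sᶜ.powerset, bsgn b * ((1 : ℝ) / (n + #D).choose n
          - 2 * if q ∈ D then (1 : ℝ) / (n + #D).choose n else 0) :=
        sum_congr rfl fun D _ => by
          rw [bsgn_xor]; by_cases hqD : q ∈ D <;> simp [hqD] <;> ring
    _ = bsgn b * (4 ^ n / (2 * n).choose n - 1) := by
        rw [← mul_sum, sum_sub_distrib, ← mul_sum,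
          sum_powerset_union_powerset_compl_inv_choose _ hs hsc,
          sum_powerset_union_powerset_compl_ite_mem_inv_choose _ hs hsc]
        ring

/-- The quotient is `E[ε_q | t(ε) = e]`, since `ε` is uniform and `t(ε)` is uniform
on `Tset m n ε`. -/
theorem coupling_cond_expectation_general (n : ℕ) (m : ℕ)
    (hm : m = 2 * n) (q : Fin m) (e : Fin m → Bool) (he : e ∈ balanced m n) :
    (∑ ε : Fin m → Bool,
        if e ∈ Tset m n ε then bsgn (ε q) / (Tset m n ε).card else 0) /
      (∑ ε : Fin m → Bool,
        if e ∈ Tset m n ε then (1 : ℝ) / (Tset m n ε).card else 0)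
      = (1 - (m.choose n : ℝ) / 2 ^ m) * bsgn (e q) := by
  have hA : #(ones e) = n := mem_balanced.1 he
  have hAc : #(ones e)ᶜ = n := by rw [card_compl, Fintype.card_fin, hA]; omega
  have hC : (0 : ℝ) < (2 * n).choose n := Nat.cast_pos.2 (Nat.choose_pos (by omega))
  rw [sum_Tset_eq_sum_powerset hm he, sum_Tset_eq_sum_powerset hm he (fun _ => 1)]
  simp only [flipOn_apply]
  rw [sum_powerset_union_powerset_compl_bsgn_xor _ hA hAc,
    sum_powerset_union_powerset_compl_inv_choose _ hA hAc, hm, pow_mul]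
  field_simp
  ring

/-- Coupling expectation lemma: for every coordinate `q`,
`E[ε_q | t(ε)] = (1 − 2^{−m} C(m,n)) · t_q(ε)`, stated as a conditional
expectation given `t(ε) = e` for every balanced `e`. -/
theorem coupling_cond_expectation (n : ℕ) (hn : 0 < n) (m : ℕ)
    (hm : m = 2 * n) (q : Fin m) (e : Fin m → Bool) (he : e ∈ balanced m n) :
    (∑ ε : Fin m → Bool,
        if e ∈ Tset m n ε then bsgn (ε q) / (Tset m n ε).card else 0) /
      (∑ ε : Fin m → Bool,
        if e ∈ Tset m n ε then (1 : ℝ) / (Tset m n ε).card else 0)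
      = (1 - (m.choose n : ℝ) / 2 ^ m) * bsgn (e q) :=
  coupling_cond_expectation_general n m hm q e he
end

section
/- Let Z_m = {z_1,...,z_m} with m even and F a finite set of functions Z_m → ℝ. Then the permutational Rademacher complexity satisfies Q_{m,m/2}(F, Z_m) ≤ (1 + 2/(√(2πm) − 2)) · R_m(F, Z_m), where R_m(F, Z_m) = E_ε[sup_{f∈F} (2/m) Σ_{i=1}^m ε_i f(z_i)] is the conditional Rademacher complexity with i.i.d. uniform ±1 signs ε_i. -/
open Finset
open scoped Classical

/-- Permutational Rademacher complexity of a finite nonempty class `F` of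
functions on the `m`-point set `Fin m`, with split parameter `n`. -/
noncomputable def PRCu {m : ℕ} (F : Finset (Fin m → ℝ)) (hF : F.Nonempty)
    (n : ℕ) : ℝ :=
  (1 / (m.choose n : ℝ)) *
    ∑ S ∈ (Finset.univ : Finset (Fin m)).powersetCard n,
      F.sup' hF fun f => favg f (Finset.univ \ S) - favg f S

/-- Conditional Rademacher complexity of a finite nonempty class `F` of
functions on `Fin m`. -/
noncomputable def Rad {m : ℕ} (F : Finset (Fin m → ℝ)) (hF : F.Nonempty) : ℝ :=
  (∑ ε : Fin m → Bool,
      F.sup' hF fun f => (2 / (m : ℝ)) * ∑ i, bsgn (ε i) * f i) / 2 ^ m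

/-!
Let `Φ v = max_{f ∈ F} ∑ᵢ vᵢ f i` (`supPairing`) and let `S k` (`layerSum`) be the sum of `Φ` over
the sign vectors of the `k`-subsets. With `m = 2n` and `C = (2n choose n)`, the PRC is `S n / (n C)`
and the Rademacher complexity is `∑ₖ S k / (n 4ⁿ)`. Fix `P` with `|P| = n` and `r ≤ n`: the
`r`-subsets of `P` together with the complements of the `r`-subsets of `Pᶜ` have sign vectors
summing to `(2r/n) (n choose r)` times that of `P`, and since `Φ` is a maximum of linear forms,
`Φ` at `P` is bounded accordingly by the sum of `Φ` over that family. Averaging over `P` gives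
`2r (2n choose r) S n ≤ n C (S r + S (2n - r))`, and summing over `r ≤ n` with
`∑_{r ≤ n} r (2n choose r) = n 4ⁿ / 2` gives `(4ⁿ - C) S n ≤ C ∑ₖ S k`, i.e.
`PRC ≤ 4ⁿ / (4ⁿ - C) · Rad`. As `Rad ≥ 0` (pair `T` with `Tᶜ`), Wallis' inequality
`C √(π n) ≤ 4ⁿ` lets us replace this factor by `1 + 1 / (√(π n) - 1) = 1 + 2 / (√(2π m) - 2)`.
-/

namespace Finset

theorem card_mul_card_filter_mem_powersetCard {α : Type*} [DecidableEq α] {Q : Finset α} {i : α}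
    (hi : i ∈ Q) (r : ℕ) : #Q * #{T ∈ Q.powersetCard r | i ∈ T} = r * (#Q).choose r := by
  obtain ⟨q, hq⟩ : ∃ q, #Q = q + 1 := Nat.exists_eq_add_one.mpr (card_pos.mpr ⟨i, hi⟩)
  cases r with
  | zero => simp
  | succ s =>
    have h := card_filter_powersetCard_subset {i} Q (s + 1) (by simpa) (by simp)
    simp only [singleton_subset_iff, card_singleton, hq, Nat.add_sub_cancel] at h
    rw [h, hq, Nat.add_one_mul_choose_eq, mul_comm]

theorem sum_powersetCard_sum_powersetCard {α M : Type*} [DecidableEq α] [AddCommMonoid M]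
    (U : Finset α) {r n : ℕ} (hrn : r ≤ n) (g : Finset α → M) :
    ∑ P ∈ U.powersetCard n, ∑ T ∈ P.powersetCard r, g T
      = (#U - r).choose (n - r) • ∑ T ∈ U.powersetCard r, g T := by
  rw [sum_comm' (t' := U.powersetCard r) (s' := fun T => {P ∈ U.powersetCard n | T ⊆ P}),
    smul_sum]
  · refine sum_congr rfl fun T hT => ?_
    obtain ⟨hTU, rfl⟩ := mem_powersetCard.mp hT
    rw [sum_const, card_filter_powersetCard_subset T U n hTU hrn]
  · intro P T
    simp only [mem_powersetCard, mem_filter]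
    constructor
    · rintro ⟨⟨hPU, rfl⟩, hTP, rfl⟩
      exact ⟨⟨⟨hPU, rfl⟩, hTP⟩, hTP.trans hPU, rfl⟩
    · rintro ⟨⟨⟨hPU, rfl⟩, hTP⟩, -, rfl⟩
      exact ⟨⟨hPU, rfl⟩, hTP, rfl⟩

theorem sum_powersetCard_univ_compl {α M : Type*} [Fintype α] [DecidableEq α] [AddCommMonoid M]
    {k : ℕ} (hk : k ≤ Fintype.card α) (g : Finset α → M) :
    ∑ T ∈ univ.powersetCard k, g Tᶜ = ∑ T ∈ univ.powersetCard (Fintype.card α - k), g T := by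
  refine sum_nbij' compl compl (fun T hT => ?_) (fun T hT => ?_) (fun T _ => compl_compl T)
    (fun T _ => compl_compl T) (fun _ _ => rfl)
  · simp_all [card_compl]
  · simp_all [card_compl]; omega

theorem sum_range_succ_add_reflect {M : Type*} [AddCommMonoid M] (n : ℕ) (g : ℕ → M) :
    ∑ r ∈ range (n + 1), (g r + g (2 * n - r)) = ∑ k ∈ range (2 * n + 1), g k + g n := by
  have reflect : ∑ r ∈ range (n + 1), g (2 * n - r) = ∑ k ∈ range n, g (n + 1 + k) + g n := by
    rw [← sum_range_reflect, sum_range_succ']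
    congr 1
    · exact sum_congr rfl fun r hr => congrArg g (by simp at hr; omega)
    · congr 1; omega
  rw [sum_add_distrib, reflect, ← add_assoc, ← sum_range_add, show n + 1 + n = 2 * n + 1 by ring]

end Finset

theorem Fintype.sum_bool_fun_eq_sum_finset {α M : Type*} [Fintype α] [DecidableEq α]
    [AddCommMonoid M] (g : (α → Bool) → M) :
    ∑ ε, g ε = ∑ T : Finset α, g fun i => decide (i ∈ T) := by
  refine (Fintype.sum_bijective (fun T i => decide (i ∈ T)) ⟨fun T T' h => ?_, fun ε => ?_⟩ _ _
    fun _ => rfl).symm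
  · ext i; simpa using congrFun h i
  · exact ⟨univ.filter fun i => ε i, funext fun i => by simp⟩

theorem Nat.two_mul_sum_range_mul_choose_two_mul (n : ℕ) :
    2 * ∑ r ∈ range (n + 1), r * (2 * n).choose r = n * 4 ^ n := by
  cases n with
  | zero => simp
  | succ p =>
    have term (r : ℕ) :
        (r + 1) * (2 * p + 1 + 1).choose (r + 1) = (2 * p + 2) * (2 * p + 1).choose r := by
      rw [mul_comm, ← Nat.add_one_mul_choose_eq]
    rw [sum_range_succ', show 2 * (p + 1) = 2 * p + 1 + 1 by ring]
    simp only [term, ← mul_sum, Nat.sum_range_choose_halfway, zero_mul, add_zero]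
    ring

open Real in
theorem Nat.choose_two_mul_mul_sqrt_pi_mul_le (n : ℕ) :
    ((2 * n).choose n : ℝ) * √(π * n) ≤ 4 ^ n := by
  set C : ℝ := ((2 * n).choose n : ℝ)
  have hC : 0 < C := by positivity [Nat.choose_pos (show n ≤ 2 * n by omega)]
  have hfac : ((2 * n).factorial : ℝ) = C * n.factorial ^ 2 := by
    have h := Nat.choose_mul_factorial_mul_factorial (show n ≤ 2 * n by omega)
    rw [show 2 * n - n = n by omega] at h
    rw [← h]; push_cast; ring
  have wallis : (2 * n + 1) ^ 2 * π * C ^ 2 ≤ 4 * (n + 1) * 16 ^ n := by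
    have h := Real.Wallis.le_W n
    rw [Real.Wallis.W_eq_factorial_ratio, hfac, le_div_iff₀ (by positivity),
      show (2 : ℝ) ^ (4 * n) = 16 ^ n by rw [pow_mul]; norm_num, div_mul_eq_mul_div,
      div_mul_eq_mul_div, div_le_iff₀ (by positivity)] at h
    refine le_of_mul_le_mul_left (a := (n.factorial : ℝ) ^ 4) ?_ (by positivity)
    linear_combination 2 * h
  have hsq : π * n * C ^ 2 ≤ 16 ^ n := by
    refine le_of_mul_le_mul_right (a := (4 * (n + 1) : ℝ)) ?_ (by positivity)
    nlinarith [mul_nonneg pi_pos.le (sq_nonneg C)]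
  rw [← pow_le_pow_iff_left₀ (by positivity) (by positivity) two_ne_zero, mul_pow,
    sq_sqrt (by positivity), ← pow_mul, mul_comm n 2, pow_mul, show (4 : ℝ) ^ 2 = 16 by norm_num]
  linarith

section SignVec
variable {α : Type*} [DecidableEq α]

def signVec (T : Finset α) (i : α) : ℝ := if i ∈ T then 1 else -1

theorem signVec_compl [Fintype α] (T : Finset α) : signVec Tᶜ = -signVec T := by
  ext i; by_cases h : i ∈ T <;> simp [signVec, h]

theorem sum_signVec_mul [Fintype α] (T : Finset α) (f : α → ℝ) :
    ∑ i, signVec T i * f i = ∑ i ∈ T, f i - ∑ i ∈ Tᶜ, f i := by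
  rw [← sum_add_sum_compl T, sub_eq_add_neg, ← sum_neg_distrib]
  congr 1 <;> refine sum_congr rfl fun i hi => ?_ <;> simp_all [signVec]

theorem sum_signVec_powersetCard (Q : Finset α) (r : ℕ) (i : α) :
    ∑ T ∈ Q.powersetCard r, signVec T i
      = 2 * #{T ∈ Q.powersetCard r | i ∈ T} - ((#Q).choose r : ℝ) := by
  have h := card_filter_add_card_filter_not (s := Q.powersetCard r) (p := fun T => i ∈ T)
  rw [card_powersetCard] at h
  simp only [signVec, sum_ite, sum_const, nsmul_eq_mul, ← h]
  push_cast; ring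

theorem card_mul_sum_signVec_sub [Fintype α] {n : ℕ} {P : Finset α} (hP : #P = n)
    (hPc : #Pᶜ = n) (r : ℕ) (i : α) :
    n * (∑ T ∈ P.powersetCard r, signVec T i - ∑ T ∈ Pᶜ.powersetCard r, signVec T i)
      = 2 * r * n.choose r * signVec P i := by
  have count {Q : Finset α} (hQ : #Q = n) (hi : i ∈ Q) :
      (n : ℝ) * #{T ∈ Q.powersetCard r | i ∈ T} = r * n.choose r := by
    rw [← hQ]; exact_mod_cast card_mul_card_filter_mem_powersetCard hi r
  have empty {Q : Finset α} (hi : i ∉ Q) : #{T ∈ Q.powersetCard r | i ∈ T} = 0 :=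
    card_eq_zero.mpr (filter_eq_empty_iff.mpr fun T hT hiT => hi ((mem_powersetCard.mp hT).1 hiT))
  rw [sum_signVec_powersetCard, sum_signVec_powersetCard, hP, hPc, signVec]
  by_cases hi : i ∈ P
  · rw [if_pos hi, empty (notMem_compl.mpr hi)]
    push_cast
    linear_combination 2 * count hP hi
  · rw [if_neg hi, empty hi]
    push_cast
    linear_combination -2 * count hPc (mem_compl.mpr hi)

end SignVec

section SupPairing
variable {α ι : Type*} [Fintype α] (F : Finset (α → ℝ)) (hF : F.Nonempty)

noncomputable def supPairing (v : α → ℝ) : ℝ := F.sup' hF fun f => ∑ i, v i * f i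

theorem mul_supPairing_le_sum {s : Finset ι} {w : ι → ℝ} (hw : ∀ t ∈ s, 0 ≤ w t)
    {v : ι → α → ℝ} {c : ℝ} {v₀ : α → ℝ} (h : ∑ t ∈ s, w t • v t = c • v₀) :
    c * supPairing F hF v₀ ≤ ∑ t ∈ s, w t * supPairing F hF (v t) := by
  obtain ⟨f, hf, hmax⟩ := F.exists_mem_eq_sup' hF fun f => ∑ i, v₀ i * f i
  calc c * supPairing F hF v₀ = ∑ t ∈ s, w t * ∑ i, v t i * f i := by
        simp only [supPairing, hmax, mul_sum, ← mul_assoc]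
        rw [sum_comm]
        refine sum_congr rfl fun i _ => ?_
        have hi := congrFun h i
        simp only [Finset.sum_apply, Pi.smul_apply, smul_eq_mul] at hi
        rw [← sum_mul, hi]
    _ ≤ ∑ t ∈ s, w t * supPairing F hF (v t) :=
        sum_le_sum fun t ht =>
          mul_le_mul_of_nonneg_left (le_sup' (fun f => ∑ i, v t i * f i) hf) (hw t ht)

theorem supPairing_add_supPairing_neg_nonneg (v : α → ℝ) :
    0 ≤ supPairing F hF v + supPairing F hF (-v) := by
  obtain ⟨f, hf⟩ := hF
  calc (0 : ℝ) = ∑ i, v i * f i + ∑ i, (-v) i * f i := by simp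
    _ ≤ _ := add_le_add (le_sup' (fun f => ∑ i, v i * f i) hf)
        (le_sup' (fun f => ∑ i, (-v) i * f i) hf)

variable [DecidableEq α]

theorem sum_supPairing_signVec_nonneg : 0 ≤ ∑ T : Finset α, supPairing F hF (signVec T) := by
  have h : ∑ T : Finset α, supPairing F hF (signVec Tᶜ)
      = ∑ T : Finset α, supPairing F hF (signVec T) :=
    Fintype.sum_bijective _ compl_involutive.bijective _ _ fun _ => rfl
  have := sum_nonneg fun T (_ : T ∈ univ) =>
    supPairing_add_supPairing_neg_nonneg F hF (signVec T)
  simp only [sum_add_distrib, ← signVec_compl, h] at this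
  linarith

theorem mul_supPairing_signVec_le {n : ℕ} {P : Finset α} (hP : #P = n) (hPc : #Pᶜ = n)
    (r : ℕ) :
    2 * r * n.choose r * supPairing F hF (signVec P)
      ≤ n * (∑ T ∈ P.powersetCard r, supPairing F hF (signVec T)
          + ∑ T ∈ Pᶜ.powersetCard r, supPairing F hF (signVec Tᶜ)) := by
  have balance : ∑ t ∈ (P.powersetCard r).disjSum (Pᶜ.powersetCard r),
      (n : ℝ) • Sum.elim signVec (fun T => signVec Tᶜ) t
        = (2 * r * n.choose r : ℝ) • signVec P := by
    ext i
    simp only [sum_disjSum, Sum.elim_inl, Sum.elim_inr, signVec_compl, Pi.smul_apply,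
      Finset.sum_apply, Pi.neg_apply, smul_eq_mul, sum_neg_distrib, ← mul_sum]
    rw [← card_mul_sum_signVec_sub hP hPc r i]
    ring
  have := mul_supPairing_le_sum F hF (fun _ _ => Nat.cast_nonneg n) balance
  simpa only [sum_disjSum, Sum.elim_inl, Sum.elim_inr, mul_add, mul_sum] using this

noncomputable def layerSum (k : ℕ) : ℝ :=
  ∑ T ∈ univ.powersetCard k, supPairing F hF (signVec T)

theorem sum_supPairing_signVec_eq_sum_layerSum :
    ∑ T : Finset α, supPairing F hF (signVec T)
      = ∑ k ∈ range (Fintype.card α + 1), layerSum F hF k := by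
  rw [← sum_fiberwise_of_maps_to (g := card)
    fun T _ => mem_range.mpr (Nat.lt_succ_of_le (card_le_univ T))]
  refine sum_congr rfl fun k _ => sum_congr ?_ fun _ _ => rfl
  ext T; simp

variable {n : ℕ}

theorem mul_layerSum_le_mul_layerSum_add (hα : Fintype.card α = 2 * n) {r : ℕ} (hr : r ≤ n) :
    2 * r * (2 * n).choose r * layerSum F hF n
      ≤ n * (2 * n).choose n * (layerSum F hF r + layerSum F hF (2 * n - r)) := by
  set layers := layerSum F hF r + layerSum F hF (2 * n - r)
  have averaged : 2 * r * n.choose r * layerSum F hF n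
      ≤ n * ((2 * n - r).choose (n - r) * layers) := by
    have hn : n ≤ Fintype.card α := by omega
    calc 2 * r * n.choose r * layerSum F hF n
        = ∑ P ∈ univ.powersetCard n, 2 * r * n.choose r * supPairing F hF (signVec P) := by
          rw [layerSum, mul_sum]
      _ ≤ ∑ P ∈ univ.powersetCard n, n * (∑ T ∈ P.powersetCard r, supPairing F hF (signVec T)
            + ∑ T ∈ Pᶜ.powersetCard r, supPairing F hF (signVec Tᶜ)) := by
          refine sum_le_sum fun P hP => mul_supPairing_signVec_le F hF ?_ ?_ r
          · exact mem_powersetCard_univ.mp hP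
          · rw [card_compl, mem_powersetCard_univ.mp hP]; omega
      _ = n * ((2 * n - r).choose (n - r) * layers) := by
          rw [← mul_sum, sum_add_distrib, sum_powersetCard_univ_compl hn
              fun Q => ∑ T ∈ Q.powersetCard r, supPairing F hF (signVec Tᶜ),
            show Fintype.card α - n = n by omega, sum_powersetCard_sum_powersetCard _ hr,
            sum_powersetCard_sum_powersetCard _ hr,
            sum_powersetCard_univ_compl (by omega) fun T => supPairing F hF (signVec T),
            card_univ, hα, nsmul_eq_mul, nsmul_eq_mul]
          simp only [layers, layerSum]
          ring
  have hchoose : ((2 * n).choose n : ℝ) * n.choose r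
      = (2 * n).choose r * (2 * n - r).choose (n - r) := by
    exact_mod_cast Nat.choose_mul hr
  refine le_of_mul_le_mul_left ?_ (by exact_mod_cast Nat.choose_pos hr : (0 : ℝ) < n.choose r)
  calc n.choose r * (2 * r * (2 * n).choose r * layerSum F hF n)
      = (2 * n).choose r * (2 * r * n.choose r * layerSum F hF n) := by ring
    _ ≤ (2 * n).choose r * (n * ((2 * n - r).choose (n - r) * layers)) :=
        mul_le_mul_of_nonneg_left averaged (by positivity)
    _ = n.choose r * (n * (2 * n).choose n * layers) := by
        linear_combination (n * layers) * hchoose.symm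

theorem sub_choose_mul_layerSum_le (hα : Fintype.card α = 2 * n) (hn : 0 < n) :
    (4 ^ n - (2 * n).choose n) * layerSum F hF n
      ≤ (2 * n).choose n * ∑ T : Finset α, supPairing F hF (signVec T) := by
  have hsum := sum_le_sum fun r (hr : r ∈ range (n + 1)) =>
    mul_layerSum_le_mul_layerSum_add F hF hα (Nat.lt_succ_iff.mp (mem_range.mp hr))
  have hmoment : ∑ r ∈ range (n + 1), 2 * r * ((2 * n).choose r : ℝ) = n * 4 ^ n := by
    simp only [mul_assoc, ← mul_sum]
    exact_mod_cast Nat.two_mul_sum_range_mul_choose_two_mul n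
  rw [← mul_sum, sum_range_succ_add_reflect, ← sum_mul, hmoment] at hsum
  rw [sum_supPairing_signVec_eq_sum_layerSum, hα]
  refine le_of_mul_le_mul_left ?_ (by exact_mod_cast hn : (0 : ℝ) < n)
  linear_combination hsum

open Real in
theorem layerSum_div_choose_le (hα : Fintype.card α = 2 * n) (hn : 0 < n) :
    layerSum F hF n / (2 * n).choose n
      ≤ (1 + 1 / (√(π * n) - 1)) * ((∑ T : Finset α, supPairing F hF (signVec T)) / 4 ^ n) := by
  have hmain := sub_choose_mul_layerSum_le F hF hα hn
  set C : ℝ := ((2 * n).choose n : ℝ)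
  set x := √(π * n)
  set total := ∑ T : Finset α, supPairing F hF (signVec T)
  have hC : 0 < C := by positivity [Nat.choose_pos (show n ≤ 2 * n by omega)]
  have hx : 1 < x := by
    rw [show (1 : ℝ) = √1 from sqrt_one.symm]
    refine sqrt_lt_sqrt zero_le_one ?_
    have : (1 : ℝ) ≤ n := by exact_mod_cast hn
    nlinarith [pi_gt_three]
  have wallis : C * x ≤ 4 ^ n := Nat.choose_two_mul_mul_sqrt_pi_mul_le n
  have hgap : 0 < 4 ^ n - C := by nlinarith
  have htotal : 0 ≤ total := sum_supPairing_signVec_nonneg F hF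
  rw [div_le_iff₀ hC]
  calc layerSum F hF n ≤ C * total * (1 / (4 ^ n - C)) := by
        rw [← mul_div_assoc, mul_one, le_div_iff₀ hgap]; linarith
    _ ≤ C * total * (x / ((x - 1) * 4 ^ n)) := by
        refine mul_le_mul_of_nonneg_left ?_ (by positivity)
        rw [div_le_div_iff₀ hgap (by nlinarith)]
        linarith
    _ = (1 + 1 / (x - 1)) * (total / 4 ^ n) * C := by
        field_simp [show x - 1 ≠ 0 by linarith]
        ring

end SupPairing

theorem PRCu_eq_layerSum {m n : ℕ} (hm : m = 2 * n) (F : Finset (Fin m → ℝ))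
    (hF : F.Nonempty) : PRCu F hF n = layerSum F hF n / (2 * n).choose n / n := by
  have hcard : Fintype.card (Fin m) = 2 * n := by simp [hm]
  have summand : ∀ S ∈ univ.powersetCard n, (F.sup' hF fun f => favg f (univ \ S) - favg f S)
      = supPairing F hF (signVec Sᶜ) / n := by
    intro S hS
    have hS : #S = n := mem_powersetCard_univ.mp hS
    have hSc : #(univ \ S) = n := by rw [← compl_eq_univ_sdiff, card_compl, hS, hcard]; omega
    rw [supPairing, sup'_div₀ (Nat.cast_nonneg n)]
    refine sup'_congr hF rfl fun f _ => ?_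
    rw [sum_signVec_mul, compl_compl, favg, favg, hS, hSc, ← compl_eq_univ_sdiff, sub_div]
  rw [PRCu, sum_congr rfl summand, ← sum_div,
    sum_powersetCard_univ_compl (by omega) fun T => supPairing F hF (signVec T), hcard,
    show 2 * n - n = n by omega, ← layerSum, show m.choose n = (2 * n).choose n by rw [hm]]
  ring

theorem Rad_eq_sum_supPairing {m : ℕ} (F : Finset (Fin m → ℝ)) (hF : F.Nonempty) :
    Rad F hF = 2 / m * (∑ T : Finset (Fin m), supPairing F hF (signVec T)) / 2 ^ m := by
  rw [Rad, Fintype.sum_bool_fun_eq_sum_finset, mul_sum]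
  congr 1
  refine sum_congr rfl fun T _ => ?_
  rw [supPairing, mul₀_sup' (by positivity)]
  refine sup'_congr hF rfl fun f _ => ?_
  congr 2
  ext i
  by_cases h : i ∈ T <;> simp [bsgn, signVec, h]

open Real in
theorem two_div_sqrt_two_pi_mul_sub_two (n : ℕ) :
    2 / (√(2 * π * ((n + n : ℕ) : ℝ)) - 2) = 1 / (√(π * n) - 1) := by
  rw [show 2 * π * ((n + n : ℕ) : ℝ) = 2 ^ 2 * (π * n) by push_cast; ring,
    sqrt_mul (by positivity), sqrt_sq zero_le_two,
    show 2 * √(π * n) - 2 = 2 * (√(π * n) - 1) by ring, div_mul_eq_div_div, div_self two_ne_zero]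

/-- The PRC is bounded by the conditional Rademacher complexity up to the
multiplicative factor `1 + 2/(√(2πm) − 2)`. -/
theorem PRC_le_mul_Rad {m : ℕ} (hm : 2 ≤ m) (hme : Even m)
    (F : Finset (Fin m → ℝ)) (hF : F.Nonempty) :
    PRCu F hF (m / 2)
      ≤ (1 + 2 / (Real.sqrt (2 * Real.pi * m) - 2)) * Rad F hF := by
  obtain ⟨n, rfl⟩ := hme
  have hn : 0 < n := by omega
  have hdouble : n + n = 2 * n := by ring
  have hrad (t : ℝ) : 2 / ((n + n : ℕ) : ℝ) * t / 2 ^ (n + n) = t / 4 ^ n / n := by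
    rw [← two_mul, pow_mul]; push_cast; field_simp; ring
  rw [show (n + n) / 2 = n by omega, PRCu_eq_layerSum hdouble, Rad_eq_sum_supPairing,
    two_div_sqrt_two_pi_mul_sub_two, hrad, mul_div_assoc']
  exact div_le_div_of_nonneg_right (layerSum_div_choose_le F hF (by simp [hdouble]) hn)
    n.cast_nonneg
end

section
/- Let Z_m = {z_1,...,z_m} with m even and F a set of functions Z_m → ℝ uniformly bounded by B (|f(z)| ≤ B for all f ∈ F, z ∈ Z_m). Then |Q_{m,m/2}(F, Z_m) − R_m(F, Z_m)| ≤ 2B/√m, where Q is the permutational Rademacher complexity with n = m/2 and R_m is the conditional Rademacher complexity. -/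
open Finset
open scoped Classical

/-!
Write `G A = sup_f (2/m) (∑_{i ∈ A} f i - ∑_{i ∉ A} f i)`. The conditional Rademacher complexity
is the average of `G` over all subsets `A`, the permutational one its average over the middle layer
`#A = m/2`. Moving one point into `A` changes `G` by at most `4B/m`; averaging over nested pairs
`A' ⊆ A` shows that the layer averages `Q k` of `G` satisfy `|Q l - Q k| ≤ 4B |l - k| / m`. So the
two complexities differ by at most `(4B/m) 𝔼|K - m/2|` for `K ~ Bin(m, 1/2)`, and Cauchy–Schwarz
with `Var K = m/4` bounds this by `2B/√m`.
-/

section Binomial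

variable {α : Type*} [DecidableEq α]

lemma sum_powerset_sq_two_mul_card_sub_card (s : Finset α) :
    ∑ A ∈ s.powerset, ((2 * #A : ℝ) - #s) ^ 2 = #s * 2 ^ #s := by
  induction s using Finset.induction_on with
  | empty => simp
  | @insert a s ha ih =>
    have hins : ∀ A ∈ s.powerset, ((2 * #(insert a A) : ℝ) - #(insert a s)) ^ 2
        = ((2 * #A : ℝ) - #s + 1) ^ 2 := fun A hA => by
      rw [card_insert_of_notMem ha, card_insert_of_notMem fun haA => ha (mem_powerset.1 hA haA)]
      push_cast
      ring
    have hsplit : ∀ A ∈ s.powerset, ((2 * #A : ℝ) - #(insert a s)) ^ 2 + ((2 * #A : ℝ) - #s + 1) ^ 2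
        = 2 * ((2 * #A : ℝ) - #s) ^ 2 + 2 := fun A _ => by
      rw [card_insert_of_notMem ha]
      push_cast
      ring
    rw [sum_powerset_insert ha, sum_congr rfl hins, ← sum_add_distrib, sum_congr rfl hsplit,
      sum_add_distrib, ← mul_sum, ih, sum_const, card_powerset, card_insert_of_notMem ha,
      nsmul_eq_mul]
    push_cast
    ring

lemma sum_powerset_abs_two_mul_card_sub_card_le (s : Finset α) :
    ∑ A ∈ s.powerset, |(2 * #A : ℝ) - #s| ≤ 2 ^ #s * √(#s : ℝ) := by
  have hsq : (∑ A ∈ s.powerset, |(2 * #A : ℝ) - #s|) ^ 2 ≤ (2 ^ #s * √(#s : ℝ)) ^ 2 := by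
    calc (∑ A ∈ s.powerset, |(2 * #A : ℝ) - #s|) ^ 2
        ≤ #s.powerset * ∑ A ∈ s.powerset, |(2 * #A : ℝ) - #s| ^ 2 := sq_sum_le_card_mul_sum_sq
      _ = (2 ^ #s * √(#s : ℝ)) ^ 2 := by
        simp only [sq_abs, sum_powerset_sq_two_mul_card_sub_card, card_powerset, mul_pow,
          Real.sq_sqrt (Nat.cast_nonneg _)]
        push_cast
        ring
  exact (pow_le_pow_iff_left₀ (by positivity) (by positivity) two_ne_zero).1 hsq

end Binomial

section Layers

variable {α : Type*} [Fintype α]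

noncomputable def layerAvg (g : Finset α → ℝ) (k : ℕ) : ℝ :=
  (∑ A ∈ powersetCard k univ, g A) / (Fintype.card α).choose k

lemma sum_eq_sum_layerAvg_card (g : Finset α → ℝ) :
    ∑ A : Finset α, g A = ∑ A : Finset α, layerAvg g #A := by
  rw [← powerset_univ, sum_powerset, sum_powerset]
  refine sum_congr rfl fun k hk => ?_
  have hC : ((Fintype.card α).choose k : ℝ) ≠ 0 := by
    rw [mem_range, card_univ] at hk
    exact_mod_cast (Nat.choose_pos (Nat.lt_succ_iff.1 hk)).ne'
  rw [sum_powersetCard, card_univ, nsmul_eq_mul, layerAvg, mul_div_cancel₀ _ hC]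

lemma sum_powersetCard_sum_powersetCard {β : Type*} [AddCommMonoid β] (g : Finset α → β)
    {k l : ℕ} (hkl : k ≤ l) :
    ∑ A ∈ powersetCard l univ, ∑ A' ∈ powersetCard k A, g A'
      = (Fintype.card α - k).choose (l - k) • ∑ A' ∈ powersetCard k univ, g A' := by
  rw [sum_comm' (t' := powersetCard k univ)
    (s' := fun A' => (powersetCard l univ).filter (A' ⊆ ·)), smul_sum]
  · refine sum_congr rfl fun A' hA' => ?_
    have hk := (mem_powersetCard.1 hA').2
    rw [sum_const, card_filter_powersetCard_subset _ _ _ (subset_univ _) (hk ▸ hkl), card_univ, hk]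
  · intro A A'
    simp only [mem_powersetCard, mem_filter, subset_univ, true_and]
    tauto

lemma layerAvg_sub_layerAvg (g : Finset α → ℝ) {k l : ℕ} (hkl : k ≤ l)
    (hl : l ≤ Fintype.card α) :
    layerAvg g l - layerAvg g k
      = (∑ A ∈ powersetCard l univ, ∑ A' ∈ powersetCard k A, (g A - g A'))
          / ((Fintype.card α).choose l * l.choose k) := by
  have hinner : ∀ A ∈ powersetCard l (univ : Finset α),
      ∑ _A' ∈ powersetCard k A, g A = l.choose k * g A := fun A hA => by
    rw [sum_const, card_powersetCard, (mem_powersetCard.1 hA).2, nsmul_eq_mul]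
  have hchoose : ((Fintype.card α).choose l * l.choose k : ℝ)
      = (Fintype.card α).choose k * (Fintype.card α - k).choose (l - k) := by
    exact_mod_cast Nat.choose_mul hkl
  have hClk : (l.choose k : ℝ) ≠ 0 := by exact_mod_cast (Nat.choose_pos hkl).ne'
  have hC' : ((Fintype.card α - k).choose (l - k) : ℝ) ≠ 0 := by
    exact_mod_cast (Nat.choose_pos (by omega)).ne'
  rw [sum_congr rfl fun A _ => sum_sub_distrib .., sum_sub_distrib, sum_congr rfl hinner,
    ← mul_sum, sum_powersetCard_sum_powersetCard g hkl, nsmul_eq_mul, layerAvg, layerAvg, sub_div,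
    mul_comm (l.choose k : ℝ), mul_div_mul_right _ _ hClk, hchoose,
    mul_comm ((Fintype.card α).choose k : ℝ), mul_div_mul_left _ _ hC']

lemma abs_layerAvg_sub_layerAvg_le {g : Finset α → ℝ} {c : ℝ}
    (hg : ∀ A A', A' ⊆ A → |g A - g A'| ≤ c * (#A - #A' : ℝ)) {k l : ℕ}
    (hk : k ≤ Fintype.card α) (hl : l ≤ Fintype.card α) :
    |layerAvg g l - layerAvg g k| ≤ c * |(l : ℝ) - k| := by
  wlog hkl : k ≤ l generalizing k l
  · rw [abs_sub_comm, abs_sub_comm (l : ℝ)]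
    exact this hl hk (by omega)
  have hpair : ∀ A ∈ powersetCard l (univ : Finset α),
      |∑ A' ∈ powersetCard k A, (g A - g A')| ≤ l.choose k * (c * (l - k)) := fun A hA => by
    have hA := (mem_powersetCard.1 hA).2
    calc |∑ A' ∈ powersetCard k A, (g A - g A')|
        ≤ ∑ A' ∈ powersetCard k A, |g A - g A'| := abs_sum_le_sum_abs _ _
      _ ≤ ∑ _A' ∈ powersetCard k A, c * (l - k) := sum_le_sum fun A' hA' => by
          obtain ⟨hA'A, hA'⟩ := mem_powersetCard.1 hA'
          simpa only [hA, hA'] using hg A A' hA'A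
      _ = l.choose k * (c * (l - k)) := by rw [sum_const, card_powersetCard, hA, nsmul_eq_mul]
  have hpos : (0 : ℝ) < (Fintype.card α).choose l * l.choose k := by
    have := Nat.choose_pos hl; have := Nat.choose_pos hkl; positivity
  rw [layerAvg_sub_layerAvg g hkl hl, abs_div, abs_of_pos hpos, div_le_iff₀ hpos,
    abs_of_nonneg (sub_nonneg.2 (Nat.cast_le.2 hkl))]
  calc |∑ A ∈ powersetCard l univ, ∑ A' ∈ powersetCard k A, (g A - g A')|
      ≤ ∑ A ∈ powersetCard l univ, |∑ A' ∈ powersetCard k A, (g A - g A')| :=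
        abs_sum_le_sum_abs _ _
    _ ≤ ∑ _A ∈ powersetCard l (univ : Finset α), l.choose k * (c * (l - k)) := sum_le_sum hpair
    _ = c * (l - k) * ((Fintype.card α).choose l * l.choose k) := by
        rw [sum_const, card_powersetCard, card_univ, nsmul_eq_mul]
        ring

lemma abs_layerAvg_half_sub_avg_le {g : Finset α → ℝ} {c : ℝ}
    (hc : 0 ≤ c) (hg : ∀ A A', A' ⊆ A → |g A - g A'| ≤ c * (#A - #A' : ℝ))
    (hn : Even (Fintype.card α)) :
    |layerAvg g (Fintype.card α / 2) - (∑ A : Finset α, g A) / 2 ^ Fintype.card α|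
      ≤ c * √(Fintype.card α : ℝ) / 2 := by
  set n := Fintype.card α
  have hhalf : ((n / 2 : ℕ) : ℝ) = n / 2 := Nat.cast_div_charZero (even_iff_two_dvd.1 hn)
  have hlayer : ∀ A : Finset α, |layerAvg g (n / 2) - layerAvg g #A| ≤ c / 2 * |(2 * #A : ℝ) - n| :=
    fun A => by
      refine (abs_layerAvg_sub_layerAvg_le hg (card_le_univ A) (Nat.div_le_self n 2)).trans ?_
      rw [hhalf, show (n : ℝ) / 2 - #A = -((2 * #A - n) / 2) by ring, abs_neg, abs_div, abs_two]
      exact le_of_eq (by ring)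
  have h2n : (0 : ℝ) < 2 ^ n := by positivity
  calc |layerAvg g (n / 2) - (∑ A : Finset α, g A) / 2 ^ n|
      = |(∑ A : Finset α, (layerAvg g (n / 2) - layerAvg g #A)) / 2 ^ n| := by
        rw [sum_sub_distrib, sum_const, card_univ,
          Fintype.card_finset, nsmul_eq_mul, sum_eq_sum_layerAvg_card g]
        push_cast
        rw [sub_div, mul_div_cancel_left₀ _ h2n.ne']
    _ ≤ (∑ A : Finset α, c / 2 * |(2 * #A : ℝ) - n|) / 2 ^ n := by
        rw [abs_div, abs_of_pos h2n]
        gcongr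
        exact (abs_sum_le_sum_abs _ _).trans (sum_le_sum fun A _ => hlayer A)
    _ ≤ c / 2 * (2 ^ n * √(n : ℝ)) / 2 ^ n := by
        rw [← mul_sum]
        gcongr
        simpa [powerset_univ] using sum_powerset_abs_two_mul_card_sub_card_le (univ : Finset α)
    _ = c * √(n : ℝ) / 2 := by
        field_simp

end Layers

lemma abs_sup'_sub_sup'_le {ι G : Type*} [AddCommGroup G] [LinearOrder G] [IsOrderedAddMonoid G]
    {s : Finset ι} (hs : s.Nonempty) {a b : ι → G} {c : G} (h : ∀ i ∈ s, |a i - b i| ≤ c) :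
    |s.sup' hs a - s.sup' hs b| ≤ c := by
  have sup'_sub_le : ∀ a b : ι → G, (∀ i ∈ s, a i - b i ≤ c) → s.sup' hs a - s.sup' hs b ≤ c :=
    fun a b h => sub_le_iff_le_add.2 <| sup'_le hs a fun i hi =>
      (sub_le_iff_le_add.1 (h i hi)).trans (add_le_add_right (le_sup' b hi) c)
  rw [abs_sub_le_iff]
  exact ⟨sup'_sub_le a b fun i hi => (le_abs_self _).trans (h i hi),
    sup'_sub_le b a fun i hi => ((le_abs_self _).trans_eq (abs_sub_comm _ _)).trans (h i hi)⟩

section Class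

variable {α : Type*} [Fintype α]

/-- `2 ∑_{A} f - ∑ f` is the signed sum of `f` with sign `+1` on `A` and `-1` off `A`. -/
noncomputable def corrSup (F : Finset (α → ℝ)) (hF : F.Nonempty) (A : Finset α) : ℝ :=
  F.sup' hF fun f => 2 / Fintype.card α * (2 * ∑ i ∈ A, f i - ∑ i, f i)

lemma abs_corrSup_sub_corrSup_le {F : Finset (α → ℝ)} (hF : F.Nonempty) {B : ℝ}
    (hB : ∀ f ∈ F, ∀ i, |f i| ≤ B) {A A' : Finset α} (hA : A' ⊆ A) :
    |corrSup F hF A - corrSup F hF A'| ≤ 4 * B / Fintype.card α * (#A - #A' : ℝ) := by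
  refine abs_sup'_sub_sup'_le hF fun f hf => ?_
  have hdiff : 2 / Fintype.card α * (2 * ∑ i ∈ A, f i - ∑ i, f i)
      - 2 / Fintype.card α * (2 * ∑ i ∈ A', f i - ∑ i, f i)
      = 4 / Fintype.card α * ∑ i ∈ A \ A', f i := by
    rw [← sum_sdiff hA]
    ring
  have hsum : |∑ i ∈ A \ A', f i| ≤ B * (#A - #A' : ℝ) := by
    calc |∑ i ∈ A \ A', f i| ≤ #(A \ A') • B :=
          (abs_sum_le_sum_abs _ _).trans (sum_le_card_nsmul _ _ _ fun i _ => hB f hf i)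
      _ = B * (#A - #A' : ℝ) := by
          rw [nsmul_eq_mul, card_sdiff_of_subset hA, Nat.cast_sub (card_le_card hA), mul_comm]
  rw [hdiff, abs_mul, abs_of_nonneg (by positivity)]
  calc 4 / Fintype.card α * |∑ i ∈ A \ A', f i| ≤ 4 / Fintype.card α * (B * (#A - #A' : ℝ)) := by
        gcongr
    _ = 4 * B / Fintype.card α * (#A - #A' : ℝ) := by ring

end Class

lemma sum_bsgn_decide_mem_mul {α : Type*} [Fintype α] [DecidableEq α] (A : Finset α) (f : α → ℝ) :
    ∑ i, bsgn (decide (i ∈ A)) * f i = 2 * ∑ i ∈ A, f i - ∑ i, f i := by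
  have hterm : ∀ i, bsgn (decide (i ∈ A)) * f i = 2 * (if i ∈ A then f i else 0) - f i :=
    fun i => by
      by_cases hi : i ∈ A
      · simp [bsgn, hi]; ring
      · simp [bsgn, hi]
  simp only [hterm, sum_sub_distrib, ← mul_sum, sum_ite_mem, univ_inter]

lemma Rad_eq_sum_corrSup {m : ℕ} (F : Finset (Fin m → ℝ)) (hF : F.Nonempty) :
    Rad F hF = (∑ A : Finset (Fin m), corrSup F hF A) / 2 ^ m := by
  have hbij : Function.Bijective fun (A : Finset (Fin m)) i => decide (i ∈ A) :=
    ⟨fun A A' h => ext fun i => by simpa using congrFun h i,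
      fun ε => ⟨univ.filter (ε · = true), funext fun i => by simp⟩⟩
  rw [Rad, (Fintype.sum_bijective _ hbij _ _ fun A => ?_).symm]
  refine sup'_congr hF rfl fun f _ => ?_
  beta_reduce
  rw [Fintype.card_fin, sum_bsgn_decide_mem_mul]

lemma favg_univ_sdiff_sub_favg {α : Type*} [Fintype α] [DecidableEq α] (f : α → ℝ)
    {S : Finset α} (hS : 2 * #S = Fintype.card α) :
    favg f (univ \ S) - favg f S = 2 / Fintype.card α * (2 * ∑ i ∈ univ \ S, f i - ∑ i, f i) := by
  have hc : #(univ \ S) = #S := by rw [card_univ_sdiff]; omega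
  rw [favg, favg, hc, ← sum_sdiff (subset_univ S) (f := f), ← hS]
  push_cast
  ring

lemma sum_powersetCard_univ_sdiff {α β : Type*} [Fintype α] [DecidableEq α] [AddCommMonoid β]
    (g : Finset α → β) {k l : ℕ} (hkl : k + l = Fintype.card α) :
    ∑ S ∈ powersetCard k univ, g (univ \ S) = ∑ A ∈ powersetCard l univ, g A := by
  refine sum_nbij' (univ \ ·) (univ \ ·) (fun S hS => ?_) (fun A hA => ?_) (fun S _ => ?_)
    (fun A _ => ?_) fun _ _ => rfl
  all_goals simp_all [mem_powersetCard, card_univ_sdiff]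
  all_goals omega

lemma PRCu_half_eq_layerAvg_corrSup {m : ℕ} (hme : Even m) (F : Finset (Fin m → ℝ))
    (hF : F.Nonempty) : PRCu F hF (m / 2) = layerAvg (corrSup F hF) (m / 2) := by
  have hhalf : 2 * (m / 2) = m := Nat.two_mul_div_two_of_even hme
  have hsplit : m / 2 + m / 2 = Fintype.card (Fin m) := by rw [Fintype.card_fin]; omega
  rw [PRCu, layerAvg, Fintype.card_fin, one_div_mul_eq_div,
    ← sum_powersetCard_univ_sdiff (corrSup F hF) hsplit]
  refine congrArg (· / _) (sum_congr rfl fun S hS => sup'_congr hF rfl fun f _ => ?_)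
  rw [favg_univ_sdiff_sub_favg f (by rw [(mem_powersetCard.1 hS).2, Fintype.card_fin, hhalf])]

/-- For a class uniformly bounded by `B`, the PRC and the conditional
Rademacher complexity differ by at most `2B/√m`. -/
theorem abs_PRC_sub_Rad_le {m : ℕ} (hm : 0 < m) (hme : Even m) (B : ℝ)
    (F : Finset (Fin m → ℝ)) (hF : F.Nonempty)
    (hB : ∀ f ∈ F, ∀ i, |f i| ≤ B) :
    |PRCu F hF (m / 2) - Rad F hF| ≤ 2 * B / Real.sqrt m := by
  have hB0 : 0 ≤ B := let ⟨f, hf⟩ := hF; (abs_nonneg _).trans (hB f hf ⟨0, hm⟩)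
  have hbound := abs_layerAvg_half_sub_avg_le (by positivity : 0 ≤ 4 * B / Fintype.card (Fin m))
    (fun _ _ => abs_corrSup_sub_corrSup_le hF hB) (by rwa [Fintype.card_fin])
  rw [Fintype.card_fin] at hbound
  rw [PRCu_half_eq_layerAvg_corrSup hme, Rad_eq_sum_corrSup]
  calc _ ≤ 4 * B / m * √(m : ℝ) / 2 := hbound
    _ = 2 * B / √(m : ℝ) := by
      have hsq := Real.sq_sqrt (Nat.cast_nonneg (α := ℝ) m)
      field_simp
      rw [hsq]
      ring
end

section
/- Let m be even and F' = {f_1, f_2} with f_1 ≡ 1 and f_2 ≡ 0 constant functions on a set Z_m of m points. Then the permutational Rademacher complexity Q_{m,m/2}(F', Z_m) = 0, while the conditional Rademacher complexity satisfies 1/√(2m) ≤ R_m(F', Z_m) ≤ 2/√m. -/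
open Finset
open scoped Classical

/-!
Every function of `F'` is constant, so its averages over the two halves of any split agree and
`Q_{m,m/2}` vanishes. For `R_m`, the supremum over `F'` is `max(0, (2/m) Σ εᵢ)`; grouping sign
vectors by their number `k` of minus signs gives
`R_m = (2/m) 2⁻ᵐ Σₖ C(m,k) max(m - 2k, 0)`, and the partial sums
`Σ_{k ≤ j} C(m,k) (m - 2k) = (m - j) C(m,j)` evaluate this to `C(2n,n) / 4ⁿ` when `m = 2n`.
The two bounds are `1/(4n) ≤ (C(2n,n) / 4ⁿ)² ≤ 1/(2n+1)`, each proved by induction from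
`(n+1) C(2n+2,n+1) = 2(2n+1) C(2n,n)`.
-/

theorem favg_const {α : Type*} (c : ℝ) {S : Finset α} (hS : S.Nonempty) :
    favg (fun _ => c) S = c := by
  simp [favg, hS.card_ne_zero]

theorem PRCu_eq_zero_of_forall_const {m n : ℕ} (F : Finset (Fin m → ℝ)) (hF : F.Nonempty)
    (hconst : ∀ f ∈ F, ∃ c, f = fun _ => c) (hn : 0 < n) (hnm : n < m) :
    PRCu F hF n = 0 := by
  refine mul_eq_zero_of_right _ (sum_eq_zero fun S hS => ?_)
  have hcard : S.card = n := (mem_powersetCard.mp hS).2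
  have hSc : (univ \ S).Nonempty := by
    rw [← card_pos, card_sdiff_of_subset (subset_univ S), card_univ, Fintype.card_fin]
    omega
  have hSne : S.Nonempty := card_pos.mp (by omega)
  rw [sup'_congr hF rfl fun f hf => ?_, sup'_const]
  obtain ⟨c, rfl⟩ := hconst f hf
  rw [favg_const c hSc, favg_const c hSne, sub_self]

namespace Nat

theorem four_pow_sq_le_four_mul_mul_centralBinom_sq {n : ℕ} (hn : 0 < n) :
    (4 ^ n) ^ 2 ≤ 4 * n * centralBinom n ^ 2 := by
  induction n with
  | zero => omega
  | succ n ih =>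
    rcases n.eq_zero_or_pos with rfl | hn
    · decide
    have hrec := succ_mul_centralBinom_succ n
    have ih := ih hn
    suffices (n + 1) * (4 ^ (n + 1)) ^ 2 ≤ (n + 1) * (4 * (n + 1) * centralBinom (n + 1) ^ 2) from
      Nat.le_of_mul_le_mul_left this n.succ_pos
    calc (n + 1) * (4 ^ (n + 1)) ^ 2 = 16 * (n + 1) * (4 ^ n) ^ 2 := by ring
      _ ≤ 16 * (n + 1) * (4 * n * centralBinom n ^ 2) := by gcongr
      _ ≤ 4 * (2 * (2 * n + 1) * centralBinom n) ^ 2 := by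
        nlinarith [Nat.zero_le (centralBinom n ^ 2)]
      _ = (n + 1) * (4 * (n + 1) * centralBinom (n + 1) ^ 2) := by rw [← hrec]; ring

theorem centralBinom_sq_mul_two_mul_add_one_le_four_pow_sq (n : ℕ) :
    centralBinom n ^ 2 * (2 * n + 1) ≤ (4 ^ n) ^ 2 := by
  induction n with
  | zero => simp
  | succ n ih =>
    have hrec := succ_mul_centralBinom_succ n
    suffices (n + 1) ^ 2 * (centralBinom (n + 1) ^ 2 * (2 * (n + 1) + 1)) ≤
        (n + 1) ^ 2 * (4 ^ (n + 1)) ^ 2 from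
      Nat.le_of_mul_le_mul_left this (by positivity)
    calc (n + 1) ^ 2 * (centralBinom (n + 1) ^ 2 * (2 * (n + 1) + 1))
        = 4 * (2 * n + 3) * (2 * n + 1) * (centralBinom n ^ 2 * (2 * n + 1)) := by
          rw [← mul_assoc, ← mul_pow, hrec]; ring
      _ ≤ 4 * (2 * n + 3) * (2 * n + 1) * (4 ^ n) ^ 2 := by gcongr
      _ ≤ 16 * (n + 1) ^ 2 * (4 ^ n) ^ 2 := Nat.mul_le_mul_right _ (by nlinarith)
      _ = (n + 1) ^ 2 * (4 ^ (n + 1)) ^ 2 := by ring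

end Nat

theorem one_div_two_mul_sqrt_le_centralBinom_div_four_pow {n : ℕ} (hn : 0 < n) :
    1 / (2 * √n) ≤ n.centralBinom / 4 ^ n := by
  rw [div_le_div_iff₀ (by positivity) (by positivity), one_mul]
  refine (pow_le_pow_iff_left₀ (by positivity) (by positivity) two_ne_zero).mp ?_
  calc ((4 : ℝ) ^ n) ^ 2 ≤ 4 * n * n.centralBinom ^ 2 :=
        mod_cast Nat.four_pow_sq_le_four_mul_mul_centralBinom_sq hn
    _ = (n.centralBinom * (2 * √n)) ^ 2 := by
        rw [mul_pow, mul_pow, Real.sq_sqrt n.cast_nonneg]; ring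

theorem centralBinom_div_four_pow_le_one_div_sqrt (n : ℕ) :
    n.centralBinom / 4 ^ n ≤ 1 / √(2 * n + 1) := by
  rw [div_le_div_iff₀ (by positivity) (by positivity), one_mul]
  refine (pow_le_pow_iff_left₀ (by positivity) (by positivity) two_ne_zero).mp ?_
  rw [mul_pow, Real.sq_sqrt (by positivity)]
  exact_mod_cast Nat.centralBinom_sq_mul_two_mul_add_one_le_four_pow_sq n

theorem sum_bsgn_eq_card_sub_two_mul_card_false {α : Type*} [Fintype α] (ε : α → Bool) :
    ∑ i, bsgn (ε i) = Fintype.card α - 2 * #{i | ε i = false} := by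
  have hbsgn : ∀ i, bsgn (ε i) = 1 - 2 * if ε i = false then 1 else 0 := by
    intro i; cases ε i <;> norm_num [bsgn]
  simp only [hbsgn, sum_sub_distrib, ← mul_sum, sum_boole, sum_const, card_univ, nsmul_eq_mul,
    mul_one]

theorem sum_fun_bool_eq_sum_choose {α M : Type*} [Fintype α] [DecidableEq α] [AddCommMonoid M]
    (g : ℕ → M) :
    ∑ ε : α → Bool, g #{i | ε i = false} =
      ∑ k ∈ range (Fintype.card α + 1), (Fintype.card α).choose k • g k := by
  rw [← card_univ, ← sum_powerset_apply_card]
  refine sum_nbij' (fun ε => ({i | ε i = false} : Finset α)) (fun A i => decide (i ∉ A))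
    ?_ ?_ ?_ ?_ ?_
  · simp
  · simp
  · intro ε _; funext i; simp
  · intro A _; ext i; simp
  · simp

theorem sum_range_choose_mul_sub_two_mul (m j : ℕ) :
    ∑ k ∈ range (j + 1), (m.choose k : ℝ) * (m - 2 * k) = (m - j) * m.choose j := by
  induction j with
  | zero => simp
  | succ j ih =>
    have hstep : ((m : ℝ) - j) * m.choose j = (j + 1) * m.choose (j + 1) := by
      rcases le_or_gt j m with hj | hj
      · have h := Nat.choose_succ_right_eq m j
        rw [← Nat.cast_inj (R := ℝ)] at h
        push_cast [hj] at h
        linarith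
      · simp [Nat.choose_eq_zero_of_lt hj, Nat.choose_eq_zero_of_lt (hj.trans j.lt_succ_self)]
    rw [sum_range_succ, ih]
    push_cast
    linarith

theorem sum_range_choose_mul_max_sub_two_mul (n : ℕ) :
    ∑ k ∈ range (2 * n + 1), ((2 * n).choose k : ℝ) * max (((2 * n : ℕ) : ℝ) - 2 * k) 0 =
      n * (2 * n).choose n := by
  rw [show 2 * n + 1 = (n + 1) + n by ring, sum_range_add]
  have hlow : ∀ k ∈ range (n + 1),
      ((2 * n).choose k : ℝ) * max (((2 * n : ℕ) : ℝ) - 2 * k) 0 =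
        (2 * n).choose k * ((2 * n : ℕ) - 2 * k) := by
    intro k hk
    have : (k : ℝ) ≤ n := by exact_mod_cast Nat.lt_succ_iff.mp (mem_range.mp hk)
    rw [max_eq_left (by push_cast; linarith)]
  have hhigh : ∀ k ∈ range n,
      ((2 * n).choose (n + 1 + k) : ℝ) *
        max (((2 * n : ℕ) : ℝ) - 2 * (n + 1 + k : ℕ)) 0 = 0 := by
    intro k _
    rw [max_eq_right (by push_cast; linarith [(k.cast_nonneg : (0 : ℝ) ≤ k)]), mul_zero]
  rw [sum_congr rfl hlow, sum_congr rfl hhigh, sum_const_zero, add_zero,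
    sum_range_choose_mul_sub_two_mul]
  push_cast
  ring

theorem Rad_one_zero_eq_sum_choose (m : ℕ) :
    Rad ({fun _ => 1, fun _ => 0} : Finset (Fin m → ℝ)) (insert_nonempty _ _) =
      2 / m * (∑ k ∈ range (m + 1), m.choose k * max ((m : ℝ) - 2 * k) 0) / 2 ^ m := by
  have hterm : ∀ ε : Fin m → Bool,
      ({fun _ => 1, fun _ => 0} : Finset (Fin m → ℝ)).sup' (insert_nonempty _ _)
        (fun f => 2 / (m : ℝ) * ∑ i, bsgn (ε i) * f i) =
      2 / m * max ((m : ℝ) - 2 * #{i | ε i = false}) 0 := by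
    intro ε
    rw [sup'_insert (H := singleton_nonempty _), sup'_singleton,
      mul_max_of_nonneg _ _ (by positivity)]
    simp [sum_bsgn_eq_card_sub_two_mul_card_false]
  rw [Rad, sum_congr rfl fun ε _ => hterm ε, ← mul_sum,
    sum_fun_bool_eq_sum_choose (fun k => max ((m : ℝ) - 2 * k) 0)]
  simp only [Fintype.card_fin, nsmul_eq_mul]

theorem Rad_one_zero_eq_centralBinom_div {m n : ℕ} (hm : m = 2 * n) (hn : 0 < n) :
    Rad ({fun _ => 1, fun _ => 0} : Finset (Fin m → ℝ)) (insert_nonempty _ _) =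
      n.centralBinom / 4 ^ n := by
  subst hm
  rw [Rad_one_zero_eq_sum_choose, sum_range_choose_mul_max_sub_two_mul,
    ← Nat.centralBinom_eq_two_mul_choose, pow_mul]
  field_simp
  push_cast
  ring

/-- For the two-element class of constant functions `{1, 0}`, the PRC is
zero while the Rademacher complexity lies between `1/√(2m)` and `2/√m`. -/
theorem PRC_zero_Rad_bounds {m : ℕ} (hm : 0 < m) (hme : Even m) :
    PRCu ({fun _ => (1 : ℝ), fun _ => (0 : ℝ)} : Finset (Fin m → ℝ))
        (Finset.insert_nonempty _ _) (m / 2) = 0 ∧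
    1 / Real.sqrt (2 * m)
        ≤ Rad ({fun _ => (1 : ℝ), fun _ => (0 : ℝ)} : Finset (Fin m → ℝ))
            (Finset.insert_nonempty _ _) ∧
    Rad ({fun _ => (1 : ℝ), fun _ => (0 : ℝ)} : Finset (Fin m → ℝ))
        (Finset.insert_nonempty _ _) ≤ 2 / Real.sqrt m := by
  obtain ⟨n, hn⟩ := hme
  have hm2 : m = 2 * n := by omega
  have hn0 : 0 < n := by omega
  have hmR : (m : ℝ) = 2 * n := by exact_mod_cast hm2
  refine ⟨PRCu_eq_zero_of_forall_const _ _ (by simpa using ⟨⟨1, rfl⟩, 0, rfl⟩) (by omega)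
    (by omega), ?_, ?_⟩
  · rw [Rad_one_zero_eq_centralBinom_div hm2 hn0]
    calc 1 / √(2 * m) = 1 / (2 * √n) := by
          rw [hmR, ← mul_assoc, Real.sqrt_mul (by norm_num),
            show (2 : ℝ) * 2 = 2 ^ 2 by norm_num, Real.sqrt_sq zero_le_two]
      _ ≤ _ := one_div_two_mul_sqrt_le_centralBinom_div_four_pow hn0
  · rw [Rad_one_zero_eq_centralBinom_div hm2 hn0]
    calc _ ≤ 1 / √(2 * n + 1) := centralBinom_div_four_pow_le_one_div_sqrt n
      _ ≤ 1 / √m := by gcongr; linarith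
      _ ≤ 2 / √m := by gcongr; norm_num
end

section
/- Let m be even, Z_m a set of m points, and let F'' consist of all binom(m, m/2) functions whose restriction to Z_m is a {0,1}-valued vector with exactly m/2 ones. Then Q_{m,m/2}(F'', Z_m) = 1 and R_m(F'', Z_m) = 1 − 2^{−m} · binom(m, m/2). -/
open Finset
open scoped Classical

/-- The class of all `{0,1}`-valued functions on `Fin m` with exactly `m/2`
ones. -/
noncomputable def Fdd (m : ℕ) : Finset (Fin m → ℝ) :=
  ((Finset.univ : Finset (Fin m)).powersetCard (m / 2)).image
    fun S i => if i ∈ S then (1 : ℝ) else 0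

theorem Fdd_nonempty (m : ℕ) : (Fdd m).Nonempty :=
  Finset.Nonempty.image
    ((Finset.powersetCard_nonempty).2 (by simpa using Nat.div_le_self m 2)) _
/-!
For a half-size set `S`, the indicator of `univ \ S` averages `1` off `S` and `0` on `S`, the
largest possible gap, so every inner supremum of the permutational complexity equals `1`. For a
sign vector with positive set `E`, the best balanced indicator `T` maximises `#(T ∩ E)`, so the
inner Rademacher supremum is `2 / m * (2 * min (m / 2) #E - m / 2)`. Averaging over `#E`, which is
binomially distributed, and writing `2 * min h k - h = h + (k - h) - |k - h|`, the Rademacher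
complexity reduces to the vanishing mean deviation and to de Moivre's mean absolute deviation
`∑ₖ C(2h, k) |k - h| = h C(2h, h)`. Both come from the telescoping identity
`(n - 2k) C(n, k) = (k + 1) C(n, k + 1) - k C(n, k)`.
-/

namespace Nat

theorem sum_range_sub_two_mul_mul_choose (n j : ℕ) :
    ∑ k ∈ range j, ((n : ℤ) - 2 * k) * n.choose k = j * n.choose j := by
  have step : ∀ k, ((n : ℤ) - 2 * k) * n.choose k
      = (k + 1 : ℕ) * n.choose (k + 1) - k * n.choose k := by
    intro k
    rcases le_or_gt k n with hk | hk
    · have := congrArg (Nat.cast : ℕ → ℤ) (choose_succ_right_eq n k)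
      push_cast [Nat.cast_sub hk] at this ⊢
      linear_combination -this
    · simp [choose_eq_zero_of_lt hk, choose_eq_zero_of_lt (hk.trans (lt_succ_self k))]
  simp only [step, sum_range_sub (fun k => ((k : ℕ) : ℤ) * n.choose k), cast_zero, zero_mul,
    sub_zero]

theorem sum_range_choose_mul_sub_eq_zero (h : ℕ) :
    ∑ k ∈ range (2 * h + 1), ((2 * h).choose k : ℤ) * ((k : ℤ) - h) = 0 := by
  have total := sum_range_sub_two_mul_mul_choose (2 * h) (2 * h + 1)
  rw [choose_eq_zero_of_lt (lt_succ_self _), cast_zero, mul_zero] at total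
  have pointwise : ∀ k : ℕ, (((2 * h : ℕ) : ℤ) - 2 * k) * (2 * h).choose k
      = -2 * (((2 * h).choose k : ℤ) * ((k : ℤ) - h)) := by
    intro k
    push_cast; ring
  rw [sum_congr rfl fun k _ => pointwise k, ← mul_sum] at total
  simpa using total

theorem sum_range_choose_mul_abs_sub (h : ℕ) :
    ∑ k ∈ range (2 * h + 1), ((2 * h).choose k : ℤ) * |(k : ℤ) - h| = h * (2 * h).choose h := by
  have lower := sum_range_sub_two_mul_mul_choose (2 * h) h
  have mean := sum_range_choose_mul_sub_eq_zero h
  rw [← sum_range_add_sum_Ico _ (by omega : h ≤ 2 * h + 1)] at mean ⊢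
  have below : ∀ k ∈ range h, ((2 * h).choose k : ℤ) * |(k : ℤ) - h|
      = -(((2 * h).choose k : ℤ) * ((k : ℤ) - h)) := by
    intro k hk
    rw [abs_of_neg (by simpa using hk)]; ring
  have above : ∀ k ∈ Ico h (2 * h + 1), ((2 * h).choose k : ℤ) * |(k : ℤ) - h|
      = ((2 * h).choose k : ℤ) * ((k : ℤ) - h) := by
    intro k hk
    rw [abs_of_nonneg (by simpa using (mem_Ico.1 hk).1)]
  have lower_pointwise : ∀ k ∈ range h, (((2 * h : ℕ) : ℤ) - 2 * k) * (2 * h).choose k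
      = -(2 * (((2 * h).choose k : ℤ) * ((k : ℤ) - h))) := by
    intro k _
    push_cast; ring
  rw [sum_congr rfl lower_pointwise, sum_neg_distrib, ← mul_sum] at lower
  rw [sum_congr rfl below, sum_congr rfl above, sum_neg_distrib]
  linarith

theorem sum_range_choose_mul_two_mul_min_sub (h : ℕ) :
    ∑ k ∈ range (2 * h + 1), ((2 * h).choose k : ℝ) * (2 * (min h k : ℕ) - h)
      = h * (2 ^ (2 * h) - (2 * h).choose h) := by
  have mean : ∑ k ∈ range (2 * h + 1), ((2 * h).choose k : ℝ) * ((k : ℝ) - h) = 0 := by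
    exact_mod_cast sum_range_choose_mul_sub_eq_zero h
  have deMoivre : ∑ k ∈ range (2 * h + 1), ((2 * h).choose k : ℝ) * |(k : ℝ) - h|
      = h * (2 * h).choose h := by
    exact_mod_cast sum_range_choose_mul_abs_sub h
  have binomial : ∑ k ∈ range (2 * h + 1), ((2 * h).choose k : ℝ) = 2 ^ (2 * h) := by
    exact_mod_cast sum_range_choose (2 * h)
  have pointwise : ∀ k : ℕ, ((2 * h).choose k : ℝ) * (2 * (min h k : ℕ) - h)
      = (2 * h).choose k * h + (2 * h).choose k * ((k : ℝ) - h)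
        - (2 * h).choose k * |(k : ℝ) - h| := by
    intro k
    rcases le_total h k with hk | hk
    · rw [min_eq_left hk, abs_of_nonneg (by simpa using hk)]; ring
    · rw [min_eq_right hk, abs_of_nonpos (by simpa using hk)]; ring
  rw [sum_congr rfl fun k _ => pointwise k, sum_sub_distrib, sum_add_distrib, ← sum_mul, binomial,
    mean, deMoivre]
  ring

end Nat

theorem Fintype.sum_boolFun_card_eq {ι M : Type*} [Fintype ι] [DecidableEq ι] [AddCommMonoid M]
    (φ : ℕ → M) :
    ∑ ε : ι → Bool, φ #{i | ε i} = ∑ k ∈ range (card ι + 1), (card ι).choose k • φ k := by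
  rw [← card_univ, ← sum_powerset_apply_card]
  exact sum_nbij' (fun ε => ({i | ε i} : Finset ι)) (fun T i => decide (i ∈ T)) (by simp) (by simp)
    (fun ε _ => by ext; simp) (fun T _ => by ext; simp) (fun _ _ => rfl)

section Indicator

variable {ι : Type*} [DecidableEq ι]

theorem favg_ite_mem (S T : Finset ι) :
    favg (fun i => if i ∈ T then (1 : ℝ) else 0) S = #(S ∩ T) / #S := by
  rw [favg, sum_boole, filter_mem_eq_inter]

variable [Fintype ι]

theorem sum_bsgn_mul_ite_mem (ε : ι → Bool) (T : Finset ι) :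
    ∑ i, bsgn (ε i) * (if i ∈ T then (1 : ℝ) else 0) = 2 * #(T ∩ ({i | ε i} : Finset ι)) - #T := by
  have pointwise : ∀ i, bsgn (ε i) * (if i ∈ T then (1 : ℝ) else 0)
      = 2 * (if i ∈ T ∩ ({i | ε i} : Finset ι) then 1 else 0) - (if i ∈ T then 1 else 0) := by
    intro i
    by_cases hi : i ∈ T <;> by_cases he : ε i <;> norm_num [bsgn, hi, he]
  simp only [pointwise, sum_sub_distrib, ← mul_sum, sum_boole, filter_univ_mem]

theorem exists_card_eq_card_inter_eq_min {k : ℕ} (hk : k ≤ Fintype.card ι) (E : Finset ι) :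
    ∃ T : Finset ι, #T = k ∧ #(T ∩ E) = min k #E := by
  rcases le_total k #E with hkE | hEk
  · obtain ⟨T, hTE, rfl⟩ := exists_subset_card_eq hkE
    exact ⟨T, rfl, by rw [inter_eq_left.2 hTE, min_eq_left hkE]⟩
  · obtain ⟨T, hET, -, rfl⟩ := exists_subsuperset_card_eq (subset_univ E) hEk (by simpa using hk)
    exact ⟨T, rfl, by rw [inter_eq_right.2 hET, min_eq_right hEk]⟩

end Indicator

section Fdd

variable {m : ℕ}

theorem sup'_Fdd_favg_sdiff_sub_favg (hm : 0 < m / 2) (S : Finset (Fin m))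
    (hS : #(univ \ S) = m / 2) :
    (Fdd m).sup' (Fdd_nonempty m) (fun f => favg f (univ \ S) - favg f S) = 1 := by
  refine le_antisymm (sup'_le _ _ fun f hf => ?_)
    (le_sup'_of_le _ (mem_image_of_mem _ (mem_powersetCard_univ.2 hS)) ?_)
  · obtain ⟨T, -, rfl⟩ := mem_image.1 hf
    have outside : (#((univ \ S) ∩ T) / #(univ \ S) : ℝ) ≤ 1 :=
      div_le_one_of_le₀ (by exact_mod_cast card_le_card inter_subset_left) (by positivity)
    have inside : (0 : ℝ) ≤ #(S ∩ T) / #S := by positivity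
    rw [favg_ite_mem, favg_ite_mem]
    linarith
  · have hpos : (0 : ℝ) < #(univ \ S) := by rw [hS]; exact_mod_cast hm
    rw [favg_ite_mem, favg_ite_mem, inter_self, div_self hpos.ne', inter_sdiff_self, card_empty]
    norm_num

theorem sup'_Fdd_signed_sum (ε : Fin m → Bool) :
    (Fdd m).sup' (Fdd_nonempty m) (fun f => (2 / (m : ℝ)) * ∑ i, bsgn (ε i) * f i)
      = (2 / (m : ℝ)) * (2 * (min (m / 2) #{i | ε i} : ℕ) - (m / 2 : ℕ)) := by
  refine le_antisymm (sup'_le _ _ fun f hf => ?_) ?_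
  · obtain ⟨T, hT, rfl⟩ := mem_image.1 hf
    rw [mem_powersetCard_univ] at hT
    rw [sum_bsgn_mul_ite_mem, hT]
    gcongr
    exact le_min (hT ▸ card_le_card inter_subset_left) (card_le_card inter_subset_right)
  · obtain ⟨T, hT, hTE⟩ := exists_card_eq_card_inter_eq_min
      (by simpa using Nat.div_le_self m 2) ({i | ε i} : Finset (Fin m))
    refine le_sup'_of_le _ (mem_image_of_mem _ (mem_powersetCard_univ.2 hT)) ?_
    rw [sum_bsgn_mul_ite_mem, hTE, hT]

end Fdd

/-- For the class `Fdd m` of all balanced `{0,1}`-valued vectors,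
the PRC equals `1` while the Rademacher complexity equals
`1 − 2^{−m}·C(m, m/2)`. -/
theorem PRC_one_Rad_eq {m : ℕ} (hm : 0 < m) (hme : Even m) :
    PRCu (Fdd m) (Fdd_nonempty m) (m / 2) = 1 ∧
    Rad (Fdd m) (Fdd_nonempty m)
      = 1 - (m.choose (m / 2) : ℝ) / 2 ^ m := by
  obtain ⟨h, rfl⟩ := even_iff_two_dvd.1 hme
  have half : 2 * h / 2 = h := by omega
  have hh : (0 : ℝ) < h := by exact_mod_cast (by omega : 0 < h)
  constructor
  · have compl_card : ∀ S ∈ powersetCard (2 * h / 2) (univ : Finset (Fin (2 * h))),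
        #(univ \ S) = 2 * h / 2 := by
      intro S hS
      rw [card_univ_sdiff, mem_powersetCard_univ.1 hS, Fintype.card_fin]
      omega
    have hchoose : (0 : ℝ) < (2 * h).choose (2 * h / 2) := by
      exact_mod_cast Nat.choose_pos (by omega)
    rw [PRCu, sum_congr rfl fun S hS => sup'_Fdd_favg_sdiff_sub_favg (by omega) S (compl_card S hS),
      sum_const, card_powersetCard, card_univ, Fintype.card_fin, nsmul_one]
    field_simp
  · rw [Rad, sum_congr rfl fun ε _ => sup'_Fdd_signed_sum ε, Fintype.sum_boolFun_card_eq
      fun k => 2 / ((2 * h : ℕ) : ℝ) * (2 * (min (2 * h / 2) k : ℕ) - (2 * h / 2 : ℕ))]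
    simp only [Fintype.card_fin, half, ← mul_smul_comm, nsmul_eq_mul]
    rw [← mul_sum, Nat.sum_range_choose_mul_two_mul_min_sub]
    push_cast
    field_simp
end

section
/- Let Z_N = {z_1,...,z_N} and F a finite set of functions Z_N → ℝ, with N = m + u and m = u. Then the conditional Rademacher complexity is at most the transductive Rademacher complexity with parameter p = 1/4: R_N(F, Z_N) ≤ R^td_{m+u}(F, Z_N, 1/4), where R^td_{m+u}(F, Z_N, p) = (1/m + 1/u) · E_σ[sup_{f∈F} Σ_{i=1}^N σ_i f(z_i)] with σ_i i.i.d. taking values ±1 with probability p each and 0 with probability 1 − 2p. -/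
open Finset
open scoped Classical

/-- Transductive Rademacher complexity with parameter `p`: the signs
`σ_i ∈ {−1,0,+1}` are encoded by `s i : Fin 3` via `σ_i = (s i : ℕ) − 1`,
with independent weights `p` for `±1` and `1 − 2p` for `0`. -/
noncomputable def TRC {N : ℕ} (F : Finset (Fin N → ℝ)) (hF : F.Nonempty)
    (m u : ℕ) (p : ℝ) : ℝ :=
  (1 / (m : ℝ) + 1 / (u : ℝ)) *
    ∑ s : Fin N → Fin 3,
      (∏ i, if s i = 1 then 1 - 2 * p else p) *
        F.sup' hF fun f => ∑ i, (((s i : ℕ) : ℝ) - 1) * f i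

/-! Write the transductive sign as `σᵢ = εᵢ ηᵢ` with `ε` uniform in `{±1}ᴺ` and `η` uniform in
`{0,1}ᴺ`; for `p = 1/4` this is exactly the law of `σ`. For fixed `ε`, splitting `∑ᵢ εᵢ f(zᵢ)`
into the parts where `η` is `1` and where it is `0` bounds the supremum over `f` by the sum of
the suprema for `η` and for its complement `¬η`, both of which have the law of `η`: this is
Jensen's inequality `sup_f E_η ≤ E_η sup_f` with `E_η ηᵢ = 1/2`. With `N = 2m`, the prefactors
`2/N` and `1/m + 1/u = 4/N` then match. -/

section FiberCount

variable {ι β γ : Type*} [Fintype ι] [DecidableEq ι] [Fintype β] [DecidableEq γ]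

lemma Fintype.card_subtype_comp_eq_prod (e : β → γ) (s : ι → γ) :
    Fintype.card {t : ι → β // e ∘ t = s} = ∏ i, Fintype.card {b // e b = s i} := by
  rw [← Fintype.card_pi]
  exact Fintype.card_congr <|
    (Equiv.subtypeEquivRight fun t => by simp [funext_iff]).trans Equiv.subtypePiEquivPi

lemma Fintype.sum_comp_eq_sum_card_fiber_mul [Fintype γ] (e : β → γ) (H : (ι → γ) → ℝ) :
    ∑ t : ι → β, H (e ∘ t) = ∑ s : ι → γ, (∏ i, (Fintype.card {b // e b = s i} : ℝ)) * H s := by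
  rw [← Fintype.sum_fiberwise' (fun t : ι → β => e ∘ t) H]
  refine Fintype.sum_congr _ _ fun s => ?_
  rw [Finset.sum_const, Finset.card_univ, Fintype.card_subtype_comp_eq_prod, nsmul_eq_mul]
  push_cast
  rfl

end FiberCount

lemma Finset.pow_card_mul_sup'_sum_le {ι α : Type*} [Fintype ι] [DecidableEq ι]
    (F : Finset α) (hF : F.Nonempty) (y : α → ι → ℝ) :
    2 ^ Fintype.card ι * F.sup' hF (fun f => ∑ i, y f i)
      ≤ 2 * ∑ η : ι → Bool, F.sup' hF (fun f => ∑ i with η i, y f i) := by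
  have hsplit (η : ι → Bool) : F.sup' hF (fun f => ∑ i, y f i)
      ≤ F.sup' hF (fun f => ∑ i with η i, y f i) + F.sup' hF (fun f => ∑ i with !η i, y f i) := by
    refine F.sup'_le hF _ fun f hf => ?_
    rw [← Finset.sum_filter_add_sum_filter_not univ (η · = true)]
    simp only [Bool.not_eq_true, Bool.not_eq_eq_eq_not, Bool.not_true]
    exact add_le_add (F.le_sup' (fun f => ∑ i with η i, y f i) hf)
      (F.le_sup' (fun f => ∑ i with η i = false, y f i) hf)
  have hflip : ∑ η : ι → Bool, F.sup' hF (fun f => ∑ i with !η i, y f i)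
      = ∑ η : ι → Bool, F.sup' hF (fun f => ∑ i with η i, y f i) :=
    Fintype.sum_bijective (fun η => not ∘ η)
      (Function.Involutive.bijective fun η => funext fun i => Bool.not_not (η i)) _ _ fun _ => rfl
  calc 2 ^ Fintype.card ι * F.sup' hF (fun f => ∑ i, y f i)
      = ∑ _η : ι → Bool, F.sup' hF (fun f => ∑ i, y f i) := by simp
    _ ≤ ∑ η : ι → Bool, (F.sup' hF (fun f => ∑ i with η i, y f i)
          + F.sup' hF (fun f => ∑ i with !η i, y f i)) := Finset.sum_le_sum fun η _ => hsplit η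
    _ = 2 * ∑ η : ι → Bool, F.sup' hF (fun f => ∑ i with η i, y f i) := by
      rw [Finset.sum_add_distrib, hflip, two_mul]

/-- `(ε, η) ↦ σ = ε · η ∈ {−1, 0, +1}`, in the `Fin 3` encoding `σ = s − 1` of `TRC`. -/
def signMaskCode : Bool × Bool → Fin 3
  | (ε, true) => if ε then 2 else 0
  | (_, false) => 1

lemma signMaskCode_sub_one (b : Bool × Bool) :
    (((signMaskCode b : ℕ) : ℝ) - 1) = if b.2 then bsgn b.1 else 0 := by
  rcases b with ⟨_ | _, _ | _⟩ <;> norm_num [signMaskCode, bsgn]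

lemma card_signMaskCode_fiber (v : Fin 3) :
    Fintype.card {b // signMaskCode b = v} = if v = 1 then 2 else 1 := by
  revert v; decide

lemma Rad_eq {N : ℕ} (F : Finset (Fin N → ℝ)) (hF : F.Nonempty) :
    Rad F hF = 2 / N / 2 ^ N * ∑ ε : Fin N → Bool, F.sup' hF fun f => ∑ i, bsgn (ε i) * f i := by
  simp only [Rad, ← Finset.mul₀_sup' (by positivity : (0 : ℝ) ≤ 2 / N), ← Finset.mul_sum]
  ring

lemma TRC_one_quarter_eq {N : ℕ} (F : Finset (Fin N → ℝ)) (hF : F.Nonempty) (m u : ℕ) :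
    TRC F hF m u (1 / 4) = (1 / m + 1 / u) * (1 / 4) ^ N *
      ∑ ε : Fin N → Bool, ∑ η : Fin N → Bool,
        F.sup' hF fun f => ∑ i with η i, bsgn (ε i) * f i := by
  have hweight (s : Fin N → Fin 3) : (∏ i, if s i = 1 then 1 - 2 * (1 / 4 : ℝ) else 1 / 4)
      = (1 / 4) ^ N * ∏ i, (Fintype.card {b // signMaskCode b = s i} : ℝ) := by
    simp only [card_signMaskCode_fiber, ← Fin.prod_const, ← Finset.prod_mul_distrib]
    refine Finset.prod_congr rfl fun i _ => ?_
    split_ifs <;> norm_num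
  simp only [TRC, hweight, mul_assoc, ← Finset.mul_sum, ← Fintype.sum_comp_eq_sum_card_fiber_mul]
  rw [← (Equiv.arrowProdEquivProdArrow (Fin N) (fun _ => Bool) (fun _ => Bool)).symm.sum_comp,
    Fintype.sum_prod_type]
  simp only [Function.comp_apply, signMaskCode_sub_one, ite_mul, zero_mul, ← Finset.sum_filter]
  rfl

theorem Rad_le_TRC_general {N m u : ℕ} (hmu : m = u) (hN : N = m + u)
    (F : Finset (Fin N → ℝ)) (hF : F.Nonempty) :
    Rad F hF ≤ TRC F hF m u (1 / 4) := by
  subst hmu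
  set S := ∑ ε : Fin N → Bool, F.sup' hF fun f => ∑ i, bsgn (ε i) * f i
  set T := ∑ ε : Fin N → Bool, ∑ η : Fin N → Bool,
    F.sup' hF fun f => ∑ i with η i, bsgn (ε i) * f i
  have hST : 2 ^ N * S ≤ 2 * T := by
    rw [Finset.mul_sum, Finset.mul_sum]
    exact Finset.sum_le_sum fun ε _ => by
      simpa only [Fintype.card_fin] using
        Finset.pow_card_mul_sup'_sum_le F hF fun f i => bsgn (ε i) * f i
  have hcoef : (1 / m + 1 / m : ℝ) * (1 / 4) ^ N = 2 / N / 2 ^ N * (2 / 2 ^ N) := by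
    rw [one_div_pow, show (4 : ℝ) ^ N = 2 ^ N * 2 ^ N by rw [← mul_pow]; norm_num, hN]
    push_cast
    ring
  calc Rad F hF = 2 / N / 2 ^ N * S := Rad_eq F hF
    _ = 2 / N / 2 ^ N / 2 ^ N * (2 ^ N * S) := by field_simp
    _ ≤ 2 / N / 2 ^ N / 2 ^ N * (2 * T) := by gcongr
    _ = TRC F hF m m (1 / 4) := by
        rw [TRC_one_quarter_eq, hcoef]
        ring

/-- When `m = u` and `N = m + u`, the conditional Rademacher complexity is
bounded by the transductive Rademacher complexity with `p = 1/4`. -/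
theorem Rad_le_TRC {N m u : ℕ} (hm : 0 < m) (hmu : m = u) (hN : N = m + u)
    (F : Finset (Fin N → ℝ)) (hF : F.Nonempty) :
    Rad F hF ≤ TRC F hF m u (1 / 4) :=
  Rad_le_TRC_general hmu hN F hF
end
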